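/- arXiv:2205.11452 — 4 statements merged into one kernel-verified Lean document; each statement's English description precedes it below -/
import Mathlib

section
/- Let Σᵥ be a positive self-adjoint operator on a finite-dimensional real inner product space, P a self-adjoint operator, and g a vector with ⟨ΣᵥPg, Pg⟩ > 0. Define R v := v − (2⟨g, Pv⟩ / ⟨ΣᵥPg, Pg⟩)·ΣᵥPg and its adjoint R* v = v − (2⟨ΣᵥPg, v⟩ / ⟨ΣᵥPg, Pg⟩)·Pg. Then ⟨Σᵥ R* v, R* v⟩ = ⟨Σᵥ v, v⟩ for all v; i.e., R Σᵥ R* = Σᵥ. -/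
open scoped RealInnerProductSpace

/-- Finite-dimensional Boomerang reflection: let `Σᵥ` be positive self-adjoint, `P`
self-adjoint, and `g` with `⟨Σᵥ P g, P g⟩ > 0` on a finite-dimensional real inner
product space. For the adjoint reflection
`R* v = v − (2⟨Σᵥ P g, v⟩/⟨Σᵥ P g, P g⟩) P g` one has
`⟨Σᵥ (R* v), R* v⟩ = ⟨Σᵥ v, v⟩` for all `v`, i.e. `R Σᵥ R* = Σᵥ`. -/
theorem boomerang_findim_reflection_preserves_covariance
    {E : Type*} [NormedAddCommGroup E] [InnerProductSpace ℝ E]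
    [FiniteDimensional ℝ E]
    (Sv P : E →L[ℝ] E) (hSvsa : IsSelfAdjoint Sv) (hPsa : IsSelfAdjoint P)
    (hSvpos : ∀ u : E, 0 ≤ ⟪Sv u, u⟫)
    (g : E) (hg : 0 < ⟪Sv (P g), P g⟫)
    (Rstar : E → E)
    (hRstar : ∀ v, Rstar v = v - (2 * ⟪Sv (P g), v⟫ / ⟪Sv (P g), P g⟫) • P g) :
    ∀ v : E, ⟪Sv (Rstar v), Rstar v⟫ = ⟪Sv v, v⟫ := by
  intro v
  have hd : ⟪Sv (P g), P g⟫ ≠ 0 := ne_of_gt hg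
  set c : ℝ := 2 * ⟪Sv (P g), v⟫ / ⟪Sv (P g), P g⟫ with hc
  have hsym : ∀ x y : E, ⟪Sv x, y⟫ = ⟪Sv y, x⟫ := by
    intro x y
    exact (hSvsa.isSymmetric x y).trans (real_inner_comm x (Sv y)).symm
  rw [hRstar v]
  rw [map_sub, map_smul]
  rw [inner_sub_left, inner_sub_right, inner_sub_right, inner_smul_left,
    inner_smul_right, inner_smul_left, inner_smul_right]
  have h1 : ⟪Sv v, P g⟫ = ⟪Sv (P g), v⟫ := hsym v (P g)
  rw [h1]
  have : c * ⟪Sv (P g), P g⟫ = 2 * ⟪Sv (P g), v⟫ := by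
    rw [hc, div_mul_cancel₀ _ hd]
  simp only [RCLike.conj_to_real, hc]
  field_simp
  ring
end

section
/- Let A be a closed, densely defined, self-adjoint positive operator on a separable Hilbert space H, diagonalizable with orthonormal eigenbasis {e_k} and eigenvalues γ_k² > 0. For initial data x, v ∈ H define X_t = ∑_k (x_k cos(γ_k² t) + v_k sin(γ_k² t)) e_k and V_t = ∑_k (−x_k sin(γ_k² t) + v_k cos(γ_k² t)) e_k. These series converge in H for each t, the integrals ∫_0^t V_s ds and ∫_0^t X_s ds lie in the domain of A, and X_t − X_0 = A∫_0^t V_s ds, V_t − V_0 = −A∫_0^t X_s ds. Moreover X_t ∈ D(A) for all t if and only if x, v ∈ D(A). -/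
open scoped RealInnerProductSpace
open Real

variable {H : Type*} [NormedAddCommGroup H] [InnerProductSpace ℝ H] [CompleteSpace H]

open Real MeasureTheory intervalIntegral
open scoped ENNReal

set_option linter.unusedSectionVars false
set_option maxHeartbeats 1000000

lemma aux_hasSum (e : HilbertBasis ℕ ℝ H) (c : ℕ → ℝ) (hc : Summable fun k => c k ^ 2) :
    HasSum (fun k : ℕ => c k • (e k : H)) (∑' k : ℕ, c k • (e k : H)) := by
  have hmem : Memℓp c 2 := by
    apply memℓp_gen
    simpa [Real.norm_eq_abs, sq_abs] using hc
  have h := e.hasSum_repr_symm (⟨c, hmem⟩ : lp (fun _ : ℕ => ℝ) 2)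
  have h2 : HasSum (fun k : ℕ => c k • (e k : H)) (e.repr.symm ⟨c, hmem⟩) := by
    simpa using h
  simpa [h2.tsum_eq] using h2

lemma aux_inner_tsum (e : HilbertBasis ℕ ℝ H) (c : ℕ → ℝ) (hc : Summable fun k => c k ^ 2)
    (j : ℕ) : ⟪(∑' k : ℕ, c k • (e k : H)), e j⟫ = c j := by
  have h := aux_hasSum e c hc
  have h2 : HasSum (fun k : ℕ => ⟪(e j : H), c k • (e k : H)⟫)
      ⟪(e j : H), ∑' k : ℕ, c k • (e k : H)⟫ := (innerSL ℝ (e j : H)).hasSum h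
  have h3 : HasSum (fun k : ℕ => if k = j then c j else 0)
      ⟪(e j : H), ∑' k : ℕ, c k • (e k : H)⟫ := by
    refine h2.congr_fun fun k => ?_
    rw [real_inner_smul_right]
    rcases eq_or_ne k j with rfl | hk
    · have : ⟪(e k : H), (e k : H)⟫ = 1 := by
        rw [real_inner_self_eq_norm_sq, e.orthonormal.1 k]; norm_num
      simp [this, e.orthonormal.1 k]
    · have : ⟪(e j : H), (e k : H)⟫ = 0 := e.orthonormal.2 (Ne.symm hk)
      simp [this, hk]
  have h4 := h3.unique (hasSum_ite_eq j (c j))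
  rw [real_inner_comm, h4]

lemma aux_norm_sq (e : HilbertBasis ℕ ℝ H) (c : ℕ → ℝ) (hc : Summable fun k => c k ^ 2) :
    ‖∑' k : ℕ, c k • (e k : H)‖ ^ 2 = ∑' k : ℕ, c k ^ 2 := by
  set S := ∑' k : ℕ, c k • (e k : H) with hS
  have h := aux_hasSum e c hc
  have h2 : HasSum (fun k : ℕ => ⟪S, c k • (e k : H)⟫) ⟪S, S⟫ := (innerSL ℝ S).hasSum h
  have h3 : HasSum (fun k : ℕ => c k ^ 2) ⟪S, S⟫ := by
    refine h2.congr_fun fun k => ?_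
    rw [real_inner_smul_right, aux_inner_tsum e c hc k]; ring
  rw [← real_inner_self_eq_norm_sq, h3.tsum_eq]

/-- interval integrability of a coordinatewise series with continuous, uniformly
square-bounded coefficients. -/
lemma aux_integrable (e : HilbertBasis ℕ ℝ H) (c : ℕ → ℝ → ℝ) (C : ℝ)
    (hcont : ∀ k, Continuous (c k))
    (hsum : ∀ t, Summable fun k => c k t ^ 2)
    (hbd : ∀ t, (∑' k, c k t ^ 2) ≤ C) (a b : ℝ) :
    IntervalIntegrable (fun t => ∑' k : ℕ, c k t • (e k : H)) volume a b := by
  set f : ℝ → H := fun t => ∑' k : ℕ, c k t • (e k : H) with hf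
  have hmeas : AEStronglyMeasurable f volume := by
    refine aestronglyMeasurable_of_tendsto_ae (f := fun n t => ∑ k ∈ Finset.range n, c k t • (e k : H))
      Filter.atTop (fun n => ?_) ?_
    · exact (continuous_finset_sum _ fun k _ => ((hcont k).smul continuous_const)).aestronglyMeasurable
    · filter_upwards with t
      exact (aux_hasSum e (fun k => c k t) (hsum t)).tendsto_sum_nat
  have hconst : IntervalIntegrable (fun _ : ℝ => Real.sqrt C) volume a b := intervalIntegrable_const
  rw [intervalIntegrable_iff] at hconst ⊢
  refine Integrable.mono' hconst hmeas.restrict ?_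
  filter_upwards with t
  rw [Real.le_sqrt (norm_nonneg _)]
  · exact (aux_norm_sq e (fun k => c k t) (hsum t)) ▸ hbd t
  · exact le_trans (tsum_nonneg fun _ => sq_nonneg _) (hbd 0)

lemma aux_inner_integral (e : HilbertBasis ℕ ℝ H) (f : ℝ → H) (a b : ℝ)
    (hf : IntervalIntegrable f volume a b) (j : ℕ) :
    ⟪(∫ s in a..b, f s), e j⟫ = ∫ s in a..b, ⟪f s, e j⟫ := by
  have h := (innerSL ℝ (e j : H)).intervalIntegral_comp_comm hf
  simp only [innerSL_apply_apply] at h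
  rw [real_inner_comm]
  rw [← h]
  congr 1; ext s; rw [real_inner_comm]

lemma aux_int_cos (g t : ℝ) (hg : g ≠ 0) : ∫ s in (0:ℝ)..t, cos (g * s) = sin (g * t) / g := by
  rw [intervalIntegral.integral_comp_mul_left (fun u => cos u) hg]
  simp [integral_cos, div_eq_inv_mul]

lemma aux_int_sin (g t : ℝ) (hg : g ≠ 0) : ∫ s in (0:ℝ)..t, sin (g * s) = (1 - cos (g * t)) / g := by
  rw [intervalIntegral.integral_comp_mul_left (fun u => sin u) hg]
  simp [integral_sin, div_eq_inv_mul, mul_comm]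

lemma aux_int_sin_sq (g α β : ℝ) (hg : g ≠ 0) :
    ∫ s in α..β, sin (g * s) ^ 2 = (β - α) / 2 - (sin (2 * g * β) - sin (2 * g * α)) / (4 * g) := by
  have h1 : ∀ s : ℝ, sin (g * s) ^ 2 = 1 / 2 - cos (2 * g * s) / 2 := by
    intro s
    rw [Real.sin_sq_eq_half_sub]; ring_nf
  rw [intervalIntegral.integral_congr (g := fun s => 1 / 2 - cos (2 * g * s) / 2) (fun s _ => h1 s)]
  have h2 : IntervalIntegrable (fun s => cos (2 * g * s) / 2) volume α β :=
    (Continuous.intervalIntegrable (by continuity) _ _)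
  rw [intervalIntegral.integral_sub (intervalIntegrable_const) h2]
  have h3 : ∫ s in α..β, cos (2 * g * s) / 2 = (∫ s in α..β, cos (2 * g * s)) / 2 := by
    simp [intervalIntegral.integral_div]
  rw [h3, intervalIntegral.integral_comp_mul_left (fun u => cos u) (mul_ne_zero two_ne_zero hg)]
  · simp [integral_cos]
    ring

lemma aux_coeff_sq_summable (e : HilbertBasis ℕ ℝ H) (y : H) :
    Summable fun k : ℕ => ⟪y, e k⟫ ^ 2 := by
  have h := lp.memℓp (e.repr y)
  rw [memℓp_gen_iff (by norm_num)] at h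
  have h2 : ∀ k : ℕ, ‖e.repr y k‖ ^ ((2:ℝ≥0∞).toReal) = ⟪y, e k⟫ ^ 2 := by
    intro k
    rw [e.repr_apply_apply, real_inner_comm]
    norm_num [Real.norm_eq_abs, Real.rpow_natCast, sq_abs]
  exact h.congr (by simpa using h2)

/-- Position component of the Boomerang Hamiltonian flow, defined coordinatewise. -/
noncomputable def oscX (e : HilbertBasis ℕ ℝ H) (γ : ℕ → ℝ) (x v : H) (t : ℝ) : H :=
  ∑' k : ℕ, (⟪x, e k⟫ * cos (γ k ^ 2 * t) + ⟪v, e k⟫ * sin (γ k ^ 2 * t)) • (e k : H)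

/-- Velocity component of the Boomerang Hamiltonian flow, defined coordinatewise. -/
noncomputable def oscV (e : HilbertBasis ℕ ℝ H) (γ : ℕ → ℝ) (x v : H) (t : ℝ) : H :=
  ∑' k : ℕ, (-⟪x, e k⟫ * sin (γ k ^ 2 * t) + ⟪v, e k⟫ * cos (γ k ^ 2 * t)) • (e k : H)

/-- The domain `D(A) = {y : ∑ γ_k⁴ ⟨y,e_k⟩² < ∞}` of the diagonal operator `A`. -/
def oscDom (e : HilbertBasis ℕ ℝ H) (γ : ℕ → ℝ) : Set H :=
  {y : H | Summable fun k : ℕ => (γ k ^ 2) ^ 2 * ⟪y, e k⟫ ^ 2}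

/-- The diagonal positive self-adjoint operator `A y = ∑ γ_k² ⟨y,e_k⟩ e_k`. -/
noncomputable def oscA (e : HilbertBasis ℕ ℝ H) (γ : ℕ → ℝ) (y : H) : H :=
  ∑' k : ℕ, (γ k ^ 2 * ⟪y, e k⟫) • (e k : H)

/-- For a closed densely defined self-adjoint positive diagonalizable operator `A` with
eigenbasis `{e_k}` and eigenvalues `γ_k² > 0`, the coordinatewise harmonic-oscillator
series `X_t, V_t` converge in `H` for each `t`, the integrals `∫₀ᵗ V_s ds`, `∫₀ᵗ X_s ds`
lie in `D(A)`, the weak-solution identities `X_t − X_0 = A∫₀ᵗ V_s ds` and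
`V_t − V_0 = −A∫₀ᵗ X_s ds` hold, and `X_t ∈ D(A)` for all `t` iff `x, v ∈ D(A)`. -/
theorem boomerang_flow_weak_solution
    (e : HilbertBasis ℕ ℝ H) (γ : ℕ → ℝ) (hγ : ∀ k, 0 < γ k) (x v : H) :
    (∀ t : ℝ,
      HasSum (fun k : ℕ =>
          (⟪x, e k⟫ * cos (γ k ^ 2 * t) + ⟪v, e k⟫ * sin (γ k ^ 2 * t)) • (e k : H))
        (oscX e γ x v t) ∧
      HasSum (fun k : ℕ =>
          (-⟪x, e k⟫ * sin (γ k ^ 2 * t) + ⟪v, e k⟫ * cos (γ k ^ 2 * t)) • (e k : H))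
        (oscV e γ x v t)) ∧
    (∀ t : ℝ,
      (∫ s in (0:ℝ)..t, oscV e γ x v s) ∈ oscDom e γ ∧
      (∫ s in (0:ℝ)..t, oscX e γ x v s) ∈ oscDom e γ ∧
      oscX e γ x v t - oscX e γ x v 0 = oscA e γ (∫ s in (0:ℝ)..t, oscV e γ x v s) ∧
      oscV e γ x v t - oscV e γ x v 0 = -oscA e γ (∫ s in (0:ℝ)..t, oscX e γ x v s)) ∧
    ((∀ t : ℝ, oscX e γ x v t ∈ oscDom e γ) ↔ (x ∈ oscDom e γ ∧ v ∈ oscDom e γ)) := by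
  have hγ2 : ∀ k, (γ k ^ 2) ≠ 0 := fun k => pow_ne_zero 2 (hγ k).ne'
  have hx2 : Summable fun k => ⟪x, e k⟫ ^ 2 := aux_coeff_sq_summable e x
  have hv2 : Summable fun k => ⟪v, e k⟫ ^ 2 := aux_coeff_sq_summable e v
  set ca : ℝ → ℕ → ℝ :=
    fun t k => ⟪x, e k⟫ * cos (γ k ^ 2 * t) + ⟪v, e k⟫ * sin (γ k ^ 2 * t) with hca_def
  set cb : ℝ → ℕ → ℝ :=
    fun t k => -⟪x, e k⟫ * sin (γ k ^ 2 * t) + ⟪v, e k⟫ * cos (γ k ^ 2 * t) with hcb_def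
  have hsum_ca : ∀ t, Summable fun k => ca t k ^ 2 := by
    intro t
    refine Summable.of_nonneg_of_le (fun k => sq_nonneg _) (fun k => ?_) (hx2.add hv2)
    have hp := sin_sq_add_cos_sq (γ k ^ 2 * t)
    simp only [hca_def]
    nlinarith [sq_nonneg (⟪x, e k⟫ * sin (γ k ^ 2 * t) - ⟪v, e k⟫ * cos (γ k ^ 2 * t))]
  have hsum_cb : ∀ t, Summable fun k => cb t k ^ 2 := by
    intro t
    refine Summable.of_nonneg_of_le (fun k => sq_nonneg _) (fun k => ?_) (hx2.add hv2)
    have hp := sin_sq_add_cos_sq (γ k ^ 2 * t)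
    simp only [hcb_def]
    nlinarith [sq_nonneg (⟪x, e k⟫ * cos (γ k ^ 2 * t) + ⟪v, e k⟫ * sin (γ k ^ 2 * t))]
  set C : ℝ := ∑' k, (⟪x, e k⟫ ^ 2 + ⟪v, e k⟫ ^ 2) with hC_def
  have hbd_ca : ∀ t, (∑' k, ca t k ^ 2) ≤ C := by
    intro t
    refine Summable.tsum_le_tsum (fun k => ?_) (hsum_ca t) (hx2.add hv2)
    have hp := sin_sq_add_cos_sq (γ k ^ 2 * t)
    simp only [hca_def]
    nlinarith [sq_nonneg (⟪x, e k⟫ * sin (γ k ^ 2 * t) - ⟪v, e k⟫ * cos (γ k ^ 2 * t))]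
  have hbd_cb : ∀ t, (∑' k, cb t k ^ 2) ≤ C := by
    intro t
    refine Summable.tsum_le_tsum (fun k => ?_) (hsum_cb t) (hx2.add hv2)
    have hp := sin_sq_add_cos_sq (γ k ^ 2 * t)
    simp only [hcb_def]
    nlinarith [sq_nonneg (⟪x, e k⟫ * cos (γ k ^ 2 * t) + ⟪v, e k⟫ * sin (γ k ^ 2 * t))]
  have h1 : ∀ t, HasSum (fun k : ℕ => ca t k • (e k : H)) (oscX e γ x v t) :=
    fun t => aux_hasSum e (ca t) (hsum_ca t)
  have h2 : ∀ t, HasSum (fun k : ℕ => cb t k • (e k : H)) (oscV e γ x v t) :=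
    fun t => aux_hasSum e (cb t) (hsum_cb t)
  have hXc : ∀ t j, ⟪oscX e γ x v t, e j⟫ = ca t j :=
    fun t j => aux_inner_tsum e (ca t) (hsum_ca t) j
  have hVc : ∀ t j, ⟪oscV e γ x v t, e j⟫ = cb t j :=
    fun t j => aux_inner_tsum e (cb t) (hsum_cb t) j
  have hXint : ∀ a b : ℝ, IntervalIntegrable (oscX e γ x v) volume a b := by
    intro a b
    exact aux_integrable e (fun k t => ca t k) C
      (fun k => by simp only [hca_def]; fun_prop) (fun t => hsum_ca t) hbd_ca a b
  have hVint : ∀ a b : ℝ, IntervalIntegrable (oscV e γ x v) volume a b := by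
    intro a b
    exact aux_integrable e (fun k t => cb t k) C
      (fun k => by simp only [hcb_def]; fun_prop) (fun t => hsum_cb t) hbd_cb a b
  refine ⟨fun t => ⟨h1 t, h2 t⟩, ?_, ?_⟩
  · -- part 2
    intro t
    have hIVc : ∀ j, ⟪(∫ s in (0:ℝ)..t, oscV e γ x v s), e j⟫
        = (⟪x, e j⟫ * (cos (γ j ^ 2 * t) - 1) + ⟪v, e j⟫ * sin (γ j ^ 2 * t)) / γ j ^ 2 := by
      intro j
      rw [aux_inner_integral e _ 0 t (hVint 0 t) j]
      rw [intervalIntegral.integral_congr (g := fun s => cb s j) (fun s _ => hVc s j)]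
      have hi1 : IntervalIntegrable (fun s => -⟪x, e j⟫ * sin (γ j ^ 2 * s)) volume 0 t :=
        (Continuous.intervalIntegrable (by fun_prop) _ _)
      have hi2 : IntervalIntegrable (fun s => ⟪v, e j⟫ * cos (γ j ^ 2 * s)) volume 0 t :=
        (Continuous.intervalIntegrable (by fun_prop) _ _)
      simp only [hcb_def]
      rw [intervalIntegral.integral_add hi1 hi2, intervalIntegral.integral_const_mul,
        intervalIntegral.integral_const_mul, aux_int_sin _ _ (hγ2 j), aux_int_cos _ _ (hγ2 j)]
      field_simp
      ring
    have hIXc : ∀ j, ⟪(∫ s in (0:ℝ)..t, oscX e γ x v s), e j⟫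
        = (⟪x, e j⟫ * sin (γ j ^ 2 * t) + ⟪v, e j⟫ * (1 - cos (γ j ^ 2 * t))) / γ j ^ 2 := by
      intro j
      rw [aux_inner_integral e _ 0 t (hXint 0 t) j]
      rw [intervalIntegral.integral_congr (g := fun s => ca s j) (fun s _ => hXc s j)]
      have hi1 : IntervalIntegrable (fun s => ⟪x, e j⟫ * cos (γ j ^ 2 * s)) volume 0 t :=
        (Continuous.intervalIntegrable (by fun_prop) _ _)
      have hi2 : IntervalIntegrable (fun s => ⟪v, e j⟫ * sin (γ j ^ 2 * s)) volume 0 t :=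
        (Continuous.intervalIntegrable (by fun_prop) _ _)
      simp only [hca_def]
      rw [intervalIntegral.integral_add hi1 hi2, intervalIntegral.integral_const_mul,
        intervalIntegral.integral_const_mul, aux_int_sin _ _ (hγ2 j), aux_int_cos _ _ (hγ2 j)]
      field_simp
    refine ⟨?_, ?_, ?_, ?_⟩
    · -- IV in domain
      simp only [oscDom, Set.mem_setOf_eq]
      have heq : ∀ j, (γ j ^ 2) ^ 2 * ⟪(∫ s in (0:ℝ)..t, oscV e γ x v s), e j⟫ ^ 2
          = (⟪x, e j⟫ * (cos (γ j ^ 2 * t) - 1) + ⟪v, e j⟫ * sin (γ j ^ 2 * t)) ^ 2 := by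
        intro j
        have h0 := hγ2 j
        have h0' : γ j ≠ 0 := (hγ j).ne'
        rw [hIVc j, div_pow]
        field_simp
      rw [summable_congr heq]
      refine Summable.of_nonneg_of_le (fun j => sq_nonneg _) (fun j => ?_)
        ((hx2.mul_left 8).add (hv2.mul_left 2))
      have hu : (cos (γ j ^ 2 * t) - 1) ^ 2 ≤ 4 := by
        nlinarith [neg_one_le_cos (γ j ^ 2 * t), cos_le_one (γ j ^ 2 * t)]
      nlinarith [sq_nonneg (⟪x, e j⟫ * (cos (γ j ^ 2 * t) - 1) - ⟪v, e j⟫ * sin (γ j ^ 2 * t)),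
        sin_sq_le_one (γ j ^ 2 * t), sq_nonneg (⟪x, e j⟫), sq_nonneg (⟪v, e j⟫), hu]
    · -- IX in domain
      simp only [oscDom, Set.mem_setOf_eq]
      have heq : ∀ j, (γ j ^ 2) ^ 2 * ⟪(∫ s in (0:ℝ)..t, oscX e γ x v s), e j⟫ ^ 2
          = (⟪x, e j⟫ * sin (γ j ^ 2 * t) + ⟪v, e j⟫ * (1 - cos (γ j ^ 2 * t))) ^ 2 := by
        intro j
        have h0 := hγ2 j
        have h0' : γ j ≠ 0 := (hγ j).ne'
        rw [hIXc j, div_pow]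
        field_simp
      rw [summable_congr heq]
      refine Summable.of_nonneg_of_le (fun j => sq_nonneg _) (fun j => ?_)
        ((hx2.mul_left 2).add (hv2.mul_left 8))
      have hu : (1 - cos (γ j ^ 2 * t)) ^ 2 ≤ 4 := by
        nlinarith [neg_one_le_cos (γ j ^ 2 * t), cos_le_one (γ j ^ 2 * t)]
      nlinarith [sq_nonneg (⟪x, e j⟫ * sin (γ j ^ 2 * t) - ⟪v, e j⟫ * (1 - cos (γ j ^ 2 * t))),
        sin_sq_le_one (γ j ^ 2 * t), sq_nonneg (⟪x, e j⟫), sq_nonneg (⟪v, e j⟫), hu]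
    · -- X_t - X_0 = A ∫ V
      have hs : HasSum
          (fun k : ℕ => (γ k ^ 2 * ⟪(∫ s in (0:ℝ)..t, oscV e γ x v s), e k⟫) • (e k : H))
          (oscX e γ x v t - oscX e γ x v 0) := by
        have h := (h1 t).sub (h1 0)
        have heq : (fun k : ℕ =>
            (γ k ^ 2 * ⟪(∫ s in (0:ℝ)..t, oscV e γ x v s), e k⟫) • (e k : H))
            = fun k : ℕ => ca t k • (e k : H) - ca 0 k • (e k : H) := by
          funext k
          rw [← sub_smul, hIVc k]
          congr 1
          simp only [hca_def]
          have h0 := hγ2 k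
          have h0' : γ k ≠ 0 := (hγ k).ne'
          simp only [mul_zero, cos_zero, sin_zero]
          field_simp
          ring
        rw [heq]
        exact h
      exact hs.tsum_eq.symm
    · -- V_t - V_0 = -A ∫ X
      have hs : HasSum
          (fun k : ℕ => -((γ k ^ 2 * ⟪(∫ s in (0:ℝ)..t, oscX e γ x v s), e k⟫) • (e k : H)))
          (oscV e γ x v t - oscV e γ x v 0) := by
        have h := (h2 t).sub (h2 0)
        have heq : (fun k : ℕ =>
            -((γ k ^ 2 * ⟪(∫ s in (0:ℝ)..t, oscX e γ x v s), e k⟫) • (e k : H)))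
            = fun k : ℕ => cb t k • (e k : H) - cb 0 k • (e k : H) := by
          funext k
          rw [← sub_smul, ← neg_smul, hIXc k]
          congr 1
          simp only [hcb_def]
          have h0 := hγ2 k
          have h0' : γ k ≠ 0 := (hγ k).ne'
          simp only [mul_zero, cos_zero, sin_zero]
          field_simp
          ring
        rw [heq]
        exact h
      have h3 := hs.tsum_eq
      rw [tsum_neg] at h3
      exact h3.symm
  · -- part 3
    constructor
    · intro hX
      have hx4 : Summable fun k => (γ k ^ 2) ^ 2 * ⟪x, e k⟫ ^ 2 := by
        have h := hX 0
        simp only [oscDom, Set.mem_setOf_eq] at h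
        refine h.congr fun k => ?_
        rw [hXc 0 k]
        simp [hca_def]
      refine ⟨hx4, ?_⟩
      -- the hard direction : v ∈ D(A)
      simp only [oscDom, Set.mem_setOf_eq]
      set b : ℕ → ℝ := fun k => (γ k ^ 2) ^ 2 * ⟪v, e k⟫ ^ 2 with hb_def
      have hb0 : ∀ k, 0 ≤ b k := fun k => mul_nonneg (sq_nonneg _) (sq_nonneg _)
      have hbs : ∀ t, Summable fun k => b k * sin (γ k ^ 2 * t) ^ 2 := by
        intro t
        have hXt : Summable fun k => (γ k ^ 2) ^ 2 * ca t k ^ 2 := by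
          have h := hX t
          simp only [oscDom, Set.mem_setOf_eq] at h
          exact h.congr fun k => by rw [hXc t k]
        refine Summable.of_nonneg_of_le
          (fun k => mul_nonneg (hb0 k) (sq_nonneg _)) (fun k => ?_)
          ((hXt.mul_left 2).add (hx4.mul_left 2))
        have key : (⟪v, e k⟫ * sin (γ k ^ 2 * t)) ^ 2 ≤ 2 * ca t k ^ 2 + 2 * ⟪x, e k⟫ ^ 2 := by
          simp only [hca_def]
          nlinarith [sq_nonneg (⟪x, e k⟫ * cos (γ k ^ 2 * t) +
              (⟪x, e k⟫ * cos (γ k ^ 2 * t) + ⟪v, e k⟫ * sin (γ k ^ 2 * t))),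
            cos_sq_le_one (γ k ^ 2 * t), sq_nonneg (⟪x, e k⟫)]
        have := mul_le_mul_of_nonneg_left key (sq_nonneg (γ k ^ 2))
        simp only [hb_def]
        nlinarith [this]
      -- Baire category argument
      set F : ℕ → Set ℝ := fun m =>
        ⋂ n : ℕ, {t : ℝ | ∑ k ∈ Finset.range n, b k * sin (γ k ^ 2 * t) ^ 2 ≤ (m : ℝ)}
        with hF_def
      have hclosed : ∀ m, IsClosed (F m) := by
        intro m
        refine isClosed_iInter fun n => isClosed_le (by fun_prop) continuous_const
      have hcover : (⋃ m : ℕ, F m) = Set.univ := by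
        ext t
        simp only [Set.mem_iUnion, Set.mem_univ, iff_true, hF_def, Set.mem_iInter,
          Set.mem_setOf_eq]
        obtain ⟨m, hm⟩ := exists_nat_ge (∑' k, b k * sin (γ k ^ 2 * t) ^ 2)
        exact ⟨m, fun n => le_trans (Summable.sum_le_tsum (Finset.range n)
          (fun k _ => mul_nonneg (hb0 k) (sq_nonneg _)) (hbs t)) hm⟩
      obtain ⟨m, hm⟩ := nonempty_interior_of_iUnion_of_closed hclosed hcover
      obtain ⟨t₀, ht₀⟩ := hm
      rw [mem_interior_iff_mem_nhds, Metric.mem_nhds_iff] at ht₀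
      obtain ⟨ε, hε, hball⟩ := ht₀
      set α : ℝ := t₀ - ε / 2 with hα_def
      set β : ℝ := t₀ + ε / 2 with hβ_def
      have hαβ : α ≤ β := by simp only [hα_def, hβ_def]; linarith
      have hIcc : ∀ s ∈ Set.Icc α β, ∀ n : ℕ,
          ∑ k ∈ Finset.range n, b k * sin (γ k ^ 2 * s) ^ 2 ≤ (m : ℝ) := by
        intro s hs n
        have hsmem : s ∈ Metric.ball t₀ ε := by
          rw [Metric.mem_ball, Real.dist_eq]
          rw [Set.mem_Icc] at hs
          rw [abs_lt]
          constructor <;> [skip; skip] <;>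
            simp only [hα_def, hβ_def] at hs <;> cases hs with
          | intro h1 h2 => linarith
        have := hball hsmem
        simp only [hF_def, Set.mem_iInter, Set.mem_setOf_eq] at this
        exact this n
      -- per-k bound
      have hkey : ∀ k, b k ≤ (4 / ε) ^ 2 * ⟪v, e k⟫ ^ 2
          + (4 / ε) * ∫ s in α..β, b k * sin (γ k ^ 2 * s) ^ 2 := by
        intro k
        have hint_nonneg : 0 ≤ ∫ s in α..β, b k * sin (γ k ^ 2 * s) ^ 2 :=
          intervalIntegral.integral_nonneg hαβ
            (fun u _ => mul_nonneg (hb0 k) (sq_nonneg _))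
        by_cases hk : γ k ^ 2 ≤ 4 / ε
        · have h1 : b k ≤ (4 / ε) ^ 2 * ⟪v, e k⟫ ^ 2 := by
            simp only [hb_def]
            have : (γ k ^ 2) ^ 2 ≤ (4 / ε) ^ 2 :=
              pow_le_pow_left₀ (sq_nonneg _) hk 2
            nlinarith [sq_nonneg (⟪v, e k⟫)]
          nlinarith [mul_nonneg (le_of_lt (by positivity : (0:ℝ) < 4 / ε)) hint_nonneg]
        · push_neg at hk
          have hγk : (0:ℝ) < γ k ^ 2 := pow_pos (hγ k) 2
          have hεpos : (0:ℝ) < ε := hε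
          have hβα : β - α = ε := by simp only [hα_def, hβ_def]; ring
          have hintval := aux_int_sin_sq (γ k ^ 2) α β (hγ2 k)
          have hlow : ε / 4 ≤ ∫ s in α..β, sin (γ k ^ 2 * s) ^ 2 := by
            rw [hintval, hβα]
            have hbig : 4 / ε < γ k ^ 2 := hk
            have h4 : (0:ℝ) < 4 * γ k ^ 2 := by positivity
            have habs : (sin (2 * γ k ^ 2 * β) - sin (2 * γ k ^ 2 * α)) / (4 * γ k ^ 2)
                ≤ ε / 8 := by
              have h2 : sin (2 * γ k ^ 2 * β) - sin (2 * γ k ^ 2 * α) ≤ 2 := by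
                nlinarith [sin_le_one (2 * γ k ^ 2 * β), neg_one_le_sin (2 * γ k ^ 2 * α)]
              have h3 : (sin (2 * γ k ^ 2 * β) - sin (2 * γ k ^ 2 * α)) / (4 * γ k ^ 2)
                  ≤ 2 / (4 * γ k ^ 2) := by
                gcongr
              refine h3.trans ?_
              rw [div_le_div_iff₀ h4 (by norm_num : (0:ℝ) < 8)]
              have : 4 * (4 / ε) < 4 * γ k ^ 2 := by linarith
              calc (2:ℝ) * 8 = ε * (4 * (4/ε)) := by field_simp; ring
              _ ≤ ε * (4 * γ k ^ 2) := by nlinarith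
            linarith
          have hmul : b k * (ε / 4) ≤ b k * ∫ s in α..β, sin (γ k ^ 2 * s) ^ 2 :=
            mul_le_mul_of_nonneg_left hlow (hb0 k)
          have hi : ∫ s in α..β, b k * sin (γ k ^ 2 * s) ^ 2
              = b k * ∫ s in α..β, sin (γ k ^ 2 * s) ^ 2 := by
            rw [← intervalIntegral.integral_const_mul]
          have h5 : b k ≤ (4 / ε) * ∫ s in α..β, b k * sin (γ k ^ 2 * s) ^ 2 := by
            rw [hi]
            have := mul_le_mul_of_nonneg_left hmul (le_of_lt (by positivity : (0:ℝ) < 4 / ε))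
            calc b k = (4 / ε) * (b k * (ε / 4)) := by field_simp
            _ ≤ (4 / ε) * (b k * ∫ s in α..β, sin (γ k ^ 2 * s) ^ 2) := this
          nlinarith [mul_nonneg (sq_nonneg (4 / ε)) (sq_nonneg (⟪v, e k⟫))]
      -- uniform partial sum bound
      have hsumbd : ∀ n : ℕ, ∑ k ∈ Finset.range n, b k
          ≤ (4 / ε) ^ 2 * (∑' k, ⟪v, e k⟫ ^ 2) + (4 / ε) * ((m : ℝ) * ε) := by
        intro n
        have step1 : ∑ k ∈ Finset.range n, b k
            ≤ ∑ k ∈ Finset.range n, ((4 / ε) ^ 2 * ⟪v, e k⟫ ^ 2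
              + (4 / ε) * ∫ s in α..β, b k * sin (γ k ^ 2 * s) ^ 2) :=
          Finset.sum_le_sum fun k _ => hkey k
        rw [Finset.sum_add_distrib, ← Finset.mul_sum, ← Finset.mul_sum] at step1
        have step2 : ∑ k ∈ Finset.range n, ⟪v, e k⟫ ^ 2 ≤ ∑' k, ⟪v, e k⟫ ^ 2 :=
          Summable.sum_le_tsum (Finset.range n) (fun k _ => sq_nonneg _) hv2
        have step3 : ∑ k ∈ Finset.range n, ∫ s in α..β, b k * sin (γ k ^ 2 * s) ^ 2
            ≤ (m : ℝ) * ε := by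
          rw [← intervalIntegral.integral_finset_sum
            (fun k _ => Continuous.intervalIntegrable (by fun_prop) _ _)]
          have : ∫ s in α..β, ∑ k ∈ Finset.range n, b k * sin (γ k ^ 2 * s) ^ 2
              ≤ ∫ _ in α..β, (m : ℝ) := by
            refine intervalIntegral.integral_mono_on hαβ
              (Continuous.intervalIntegrable (by fun_prop) _ _)
              intervalIntegrable_const (fun s hs => hIcc s hs n)
          rw [intervalIntegral.integral_const, smul_eq_mul] at this
          have hβα : β - α = ε := by simp only [hα_def, hβ_def]; ring
          rw [hβα] at this
          linarith [this]
        have h4ε : (0:ℝ) ≤ 4 / ε := by positivity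
        calc ∑ k ∈ Finset.range n, b k
            ≤ (4 / ε) ^ 2 * ∑ k ∈ Finset.range n, ⟪v, e k⟫ ^ 2
              + (4 / ε) * ∑ k ∈ Finset.range n, ∫ s in α..β, b k * sin (γ k ^ 2 * s) ^ 2 :=
              step1
          _ ≤ (4 / ε) ^ 2 * (∑' k, ⟪v, e k⟫ ^ 2) + (4 / ε) * ((m : ℝ) * ε) := by
              have s2 := mul_le_mul_of_nonneg_left step2 (sq_nonneg (4 / ε))
              have s3 := mul_le_mul_of_nonneg_left step3 h4ε
              linarith
      exact summable_of_sum_range_le hb0 hsumbd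
    · rintro ⟨hxD, hvD⟩ t
      simp only [oscDom, Set.mem_setOf_eq] at hxD hvD ⊢
      have heq : ∀ k, (γ k ^ 2) ^ 2 * ⟪oscX e γ x v t, e k⟫ ^ 2
          = (γ k ^ 2) ^ 2 * ca t k ^ 2 := fun k => by rw [hXc t k]
      rw [summable_congr heq]
      refine Summable.of_nonneg_of_le
        (fun k => mul_nonneg (sq_nonneg _) (sq_nonneg _)) (fun k => ?_)
        ((hxD.mul_left 2).add (hvD.mul_left 2))
      have key : ca t k ^ 2 ≤ 2 * ⟪x, e k⟫ ^ 2 + 2 * ⟪v, e k⟫ ^ 2 := by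
        simp only [hca_def]
        nlinarith [sin_sq_le_one (γ k ^ 2 * t), cos_sq_le_one (γ k ^ 2 * t),
          sq_nonneg (⟪x, e k⟫), sq_nonneg (⟪v, e k⟫),
          sq_nonneg (⟪x, e k⟫ * cos (γ k ^ 2 * t) - ⟪v, e k⟫ * sin (γ k ^ 2 * t)),
          sq_nonneg (⟪x, e k⟫ * sin (γ k ^ 2 * t) - ⟪v, e k⟫ * cos (γ k ^ 2 * t)),
          sq_nonneg (⟪x, e k⟫ * sin (γ k ^ 2 * t) + ⟪v, e k⟫ * cos (γ k ^ 2 * t))]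
      have := mul_le_mul_of_nonneg_left key (sq_nonneg (γ k ^ 2))
      nlinarith [this]
end

section
/- Let π₀ = ⊗_{i≥1} N(0, γ_i²) be a Gaussian product measure with ∑ γ_i² < ∞ and ∑ γ_i⁴ < ∞. For μ_N the measure with density proportional to exp(−‖x_N‖²/2) (depending only on first N coordinates) and μ with density proportional to exp(−‖x‖²/2) with respect to π₀, one has ‖dμ/dμ_N − 1‖²_{L²(μ_N)} = ∏_{i>N} (γ_i²+1)/√(2γ_i²+1) − 1, and this quantity tends to 0 as N → ∞ (and is asymptotically (1/2)∑_{i>N} γ_i⁴). -/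
open MeasureTheory ProbabilityTheory Filter
open scoped NNReal ENNReal

private lemma gauss1 {v : ℝ} (hv : 0 < v) {t : ℝ} (ht : 0 < t) :
    ∫ x : ℝ, Real.exp (-(t * x ^ 2)) ∂(gaussianReal 0 v.toNNReal)
      = 1 / Real.sqrt (2 * t * v + 1) := by
  have hv' : v.toNNReal ≠ 0 := by
    simp [Real.toNNReal_eq_zero, not_le, hv]
  have hvc : ((v.toNNReal : ℝ≥0) : ℝ) = v := Real.coe_toNNReal v hv.le
  rw [gaussianReal_of_var_ne_zero _ hv']
  have hpdf : (gaussianPDF 0 v.toNNReal)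
      = fun x => ((gaussianPDFReal 0 v.toNNReal x).toNNReal : ℝ≥0∞) := rfl
  rw [hpdf, integral_withDensity_eq_integral_smul
    ((measurable_gaussianPDFReal _ _).real_toNNReal) _]
  have hb : 0 < t + (2*v)⁻¹ := by positivity
  have key : ∀ x : ℝ, (gaussianPDFReal 0 v.toNNReal x).toNNReal • Real.exp (-(t * x ^ 2))
      = (Real.sqrt (2 * Real.pi * v))⁻¹ * Real.exp (-(t + (2*v)⁻¹) * x ^ 2) := by
    intro x
    rw [NNReal.smul_def, Real.coe_toNNReal _ (gaussianPDFReal_nonneg _ _ _)]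
    rw [gaussianPDFReal, hvc]
    rw [smul_eq_mul, mul_assoc, ← Real.exp_add]
    congr 1
    field_simp
    ring
  simp_rw [key]
  rw [integral_const_mul, integral_gaussian]
  have h1 : (Real.sqrt (2*Real.pi*v))⁻¹ * Real.sqrt (Real.pi/(t+(2*v)⁻¹))
      = Real.sqrt ((2*Real.pi*v)⁻¹ * (Real.pi/(t+(2*v)⁻¹))) := by
    rw [← Real.sqrt_inv, ← Real.sqrt_mul (by positivity)]
  rw [h1, one_div, ← Real.sqrt_inv]
  congr 1
  have hpi := Real.pi_pos
  field_simp

private lemma block_int {Ω : Type*} [MeasurableSpace Ω]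
    (π₀ : Measure Ω) [IsProbabilityMeasure π₀]
    (γ : ℕ → ℝ) (hγ : ∀ i, 0 < γ i)
    (Z : ℕ → Ω → ℝ) (hZmeas : ∀ i, Measurable (Z i))
    (hindep : iIndepFun Z π₀)
    (hgauss : ∀ i, Measure.map (Z i) π₀ = gaussianReal 0 ((γ i ^ 2).toNNReal))
    (a : ℕ → ℝ) (ha : ∀ i, 0 < a i) (s : Finset ℕ) :
    ∫ x, Real.exp (-∑ i ∈ s, a i * Z i x ^ 2) ∂π₀
      = ∏ i ∈ s, 1 / Real.sqrt (2 * a i * γ i ^ 2 + 1) := by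
  set W : ℕ → Ω → ℝ := fun i x => a i * Z i x ^ 2 with hW
  have hWmeas : ∀ i, Measurable (W i) := fun i =>
    ((hZmeas i).pow_const 2).const_mul (a i)
  have hWindep : iIndepFun W π₀ := by
    exact hindep.comp (fun i u => a i * u ^ 2)
      (fun i => (measurable_id.pow_const 2).const_mul (a i))
  have hmgf := hWindep.mgf_sum hWmeas s (t := -1)
  have hL : mgf (∑ i ∈ s, W i) π₀ (-1) = ∫ x, Real.exp (-∑ i ∈ s, a i * Z i x ^ 2) ∂π₀ := by
    unfold mgf
    congr 1
    ext x
    simp only [Finset.sum_apply, neg_one_mul, hW]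
  have hR : ∀ i, mgf (W i) π₀ (-1) = 1 / Real.sqrt (2 * a i * γ i ^ 2 + 1) := by
    intro i
    unfold mgf
    have : ∀ x, Real.exp (-1 * W i x) = Real.exp (-(a i * Z i x ^ 2)) := by
      intro x; rw [neg_one_mul]
    simp_rw [this]
    have hmeas : AEStronglyMeasurable (fun y : ℝ => Real.exp (-(a i * y ^ 2)))
        (Measure.map (Z i) π₀) := by
      apply Continuous.aestronglyMeasurable
      continuity
    calc ∫ x, Real.exp (-(a i * Z i x ^ 2)) ∂π₀
        = ∫ y, Real.exp (-(a i * y ^ 2)) ∂(Measure.map (Z i) π₀) :=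
          (integral_map (hZmeas i).aemeasurable hmeas).symm
      _ = ∫ y, Real.exp (-(a i * y ^ 2)) ∂(gaussianReal 0 ((γ i ^ 2).toNNReal)) := by
          rw [hgauss i]
      _ = 1 / Real.sqrt (2 * a i * γ i ^ 2 + 1) := gauss1 (pow_pos (hγ i) 2) (ha i)
  rw [← hL, hmgf]
  exact Finset.prod_congr rfl fun i _ => hR i

private lemma one_add_sum_le_prod (f : ℕ → ℝ) (hf : ∀ i, 1 ≤ f i) (M : ℕ) :
    1 + ∑ i ∈ Finset.range M, (f i - 1) ≤ ∏ i ∈ Finset.range M, f i := by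
  induction M with
  | zero => simp
  | succ M ih =>
      rw [Finset.sum_range_succ, Finset.prod_range_succ]
      have h1 : (0:ℝ) ≤ ∑ i ∈ Finset.range M, (f i - 1) :=
        Finset.sum_nonneg fun i _ => by linarith [hf i]
      nlinarith [hf M, ih]


private lemma inv_sqrt_ge {u : ℝ} (hu : 0 ≤ u) :
    Real.exp (-(u / 2)) ≤ 1 / Real.sqrt (u + 1) := by
  have hs : 0 < Real.sqrt (u + 1) := Real.sqrt_pos.2 (by linarith)
  have h2 : u + 1 ≤ Real.exp (u / 2) ^ 2 := by
    have h3 : Real.exp (u / 2) ^ 2 = Real.exp u := by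
      rw [sq, ← Real.exp_add]; ring_nf
    rw [h3]
    linarith [Real.add_one_le_exp u]
  have h1 : Real.sqrt (u + 1) ≤ Real.exp (u / 2) :=
    (Real.sqrt_le_sqrt h2).trans_eq (Real.sqrt_sq (Real.exp_pos _).le)
  rw [le_div_iff₀ hs]
  calc Real.exp (-(u / 2)) * Real.sqrt (u + 1)
      ≤ Real.exp (-(u / 2)) * Real.exp (u / 2) :=
        mul_le_mul_of_nonneg_left h1 (Real.exp_pos _).le
    _ = 1 := by rw [← Real.exp_add]; simp


private lemma prod_subset_le {f : ℕ → ℝ} (hf : ∀ i, 1 ≤ f i) {s t : Finset ℕ}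
    (hst : s ⊆ t) : ∏ i ∈ s, f i ≤ ∏ i ∈ t, f i := by
  rw [← Finset.prod_sdiff hst]
  have h1 : 1 ≤ ∏ i ∈ t \ s, f i := by
    calc (1:ℝ) = ∏ _i ∈ t \ s, (1:ℝ) := (Finset.prod_const_one).symm
      _ ≤ ∏ i ∈ t \ s, f i :=
        Finset.prod_le_prod (fun _ _ => zero_le_one) (fun i _ => hf i)
  have h2 : 0 ≤ ∏ i ∈ s, f i :=
    Finset.prod_nonneg fun i _ => le_trans zero_le_one (hf i)
  nlinarith

set_option maxHeartbeats 1000000 in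
/-- Convergence of the finite-dimensional invariant measures `μ_N` to `μ` in χ²-type
distance, for `Φ(x) = ‖x‖²/2` and a Gaussian product reference measure
`π₀ = ⊗ᵢ N(0, γᵢ²)` (modelled by a probability space with independent Gaussian
coordinates `Z i`). With `μ ∝ e^{−‖x‖²/2} π₀` and `μ_N ∝ e^{−‖x_N‖²/2} π₀`,
`‖dμ/dμ_N − 1‖²_{L²(μ_N)} = ∏_{i≥N} (γᵢ²+1)/√(2γᵢ²+1) − 1`, this tends to `0` as
`N → ∞`, and is asymptotically `(1/2)∑_{i≥N} γᵢ⁴`. -/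
theorem chi_square_distance_of_finite_dim_approximation
    {Ω : Type*} [MeasurableSpace Ω]
    (π₀ : Measure Ω) [IsProbabilityMeasure π₀]
    (γ : ℕ → ℝ) (hγ : ∀ i, 0 < γ i)
    (hsum2 : Summable fun i => γ i ^ 2) (hsum4 : Summable fun i => γ i ^ 4)
    (Z : ℕ → Ω → ℝ) (hZmeas : ∀ i, Measurable (Z i))
    (hindep : iIndepFun Z π₀)
    (hgauss : ∀ i, Measure.map (Z i) π₀ = gaussianReal 0 ((γ i ^ 2).toNNReal))
    -- the squared norm `‖x‖²` and its truncations `‖x_N‖²`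
    (S : Ω → ℝ) (hS : ∀ x, S x = ∑' i : ℕ, Z i x ^ 2)
    (SN : ℕ → Ω → ℝ) (hSN : ∀ N x, SN N x = ∑ i ∈ Finset.range N, Z i x ^ 2)
    -- normalizing constants
    (c : ℝ) (hc : c = ∫ x, Real.exp (-S x / 2) ∂π₀)
    (cN : ℕ → ℝ) (hcN : ∀ N, cN N = ∫ x, Real.exp (-SN N x / 2) ∂π₀)
    -- the finite-dimensional approximating measures and the density `dμ/dμ_N`
    (μN : ℕ → Measure Ω)
    (hμN : ∀ N, μN N
      = π₀.withDensity (fun x => ENNReal.ofReal (Real.exp (-SN N x / 2) / cN N)))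
    (h : ℕ → Ω → ℝ)
    (hh : ∀ N x, h N x
      = (Real.exp (-S x / 2) / c) / (Real.exp (-SN N x / 2) / cN N)) :
    (∀ N : ℕ,
      (∫ x, (h N x - 1) ^ 2 ∂(μN N))
        = (∏' i : ℕ, (γ (N + i) ^ 2 + 1) / Real.sqrt (2 * γ (N + i) ^ 2 + 1)) - 1) ∧
    Tendsto (fun N : ℕ => ∫ x, (h N x - 1) ^ 2 ∂(μN N)) atTop (nhds 0) ∧
    Tendsto
      (fun N : ℕ => (∫ x, (h N x - 1) ^ 2 ∂(μN N))
        / ((1 / 2) * ∑' i : ℕ, γ (N + i) ^ 4)) atTop (nhds 1) := by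
  have hγ2 : ∀ i, (0:ℝ) < γ i ^ 2 := fun i => pow_pos (hγ i) 2
  set q1 : ℕ → ℝ := fun i => 1 / Real.sqrt (2 * γ i ^ 2 + 1) with hq1def
  set q2 : ℕ → ℝ := fun i => 1 / Real.sqrt (γ i ^ 2 + 1) with hq2def
  set p : ℕ → ℝ := fun i => (γ i ^ 2 + 1) / Real.sqrt (2 * γ i ^ 2 + 1) with hpdef
  have hq1pos : ∀ i, 0 < q1 i := fun i => by
    simp only [hq1def]; positivity
  have hq2pos : ∀ i, 0 < q2 i := fun i => by
    simp only [hq2def]; positivity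
  have hppos : ∀ i, 0 < p i := fun i => by
    simp only [hpdef]; positivity
  -- measurability and nonnegativity of S, SN
  have hSNmeas : ∀ N, Measurable (SN N) := by
    intro N
    have : SN N = fun x => ∑ i ∈ Finset.range N, Z i x ^ 2 := funext fun x => hSN N x
    rw [this]
    exact Finset.measurable_sum _ fun i _ => (hZmeas i).pow_const 2
  have hSNnonneg : ∀ N x, 0 ≤ SN N x := fun N x => by
    rw [hSN]; exact Finset.sum_nonneg fun i _ => sq_nonneg _
  have hSNmono : ∀ x, Monotone fun N => SN N x := by
    intro x N M hNM
    simp only [hSN]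
    exact Finset.sum_le_sum_of_subset_of_nonneg
      (Finset.range_subset_range.2 hNM) fun i _ _ => sq_nonneg _
  have hSmeas : Measurable S := by
    have hSeq : S = fun x => (∑' i, ENNReal.ofReal (Z i x ^ 2)).toReal := by
      funext x
      rw [hS, ENNReal.tsum_toReal_eq (fun i => ENNReal.ofReal_ne_top)]
      exact tsum_congr fun i => (ENNReal.toReal_ofReal (sq_nonneg _)).symm
    rw [hSeq]
    exact (Measurable.ennreal_tsum fun i =>
      ((hZmeas i).pow_const 2).ennreal_ofReal).ennreal_toReal
  have hSnonneg : ∀ x, 0 ≤ S x := fun x => by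
    rw [hS]; exact tsum_nonneg fun i => sq_nonneg _
  -- the ℕ-indexed exponential integrals
  have hexpint : ∀ (t : ℝ), 0 < t → ∀ M : ℕ,
      ∫ x, Real.exp (-(t * SN M x)) ∂π₀
        = ∏ i ∈ Finset.range M, 1 / Real.sqrt (2 * t * γ i ^ 2 + 1) := by
    intro t ht M
    have := block_int π₀ γ hγ Z hZmeas hindep hgauss (fun _ => t) (fun _ => ht)
      (Finset.range M)
    rw [← this]
    congr 1
    funext x
    rw [hSN, Finset.mul_sum]
  -- a.e. summability
  have hae : ∀ᵐ x ∂π₀, Summable fun i => Z i x ^ 2 := by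
    classical
    set G : Ω → ℝ≥0∞ := fun x => ∑' i, ENNReal.ofReal (Z i x ^ 2) with hGdef
    have hGmeas : Measurable G :=
      Measurable.ennreal_tsum fun i => ((hZmeas i).pow_const 2).ennreal_ofReal
    set B : Set Ω := {x | G x = ∞} with hBdef
    have hBmeas : MeasurableSet B := hGmeas (measurableSet_singleton ∞)
    have hBsumm : ∀ x, x ∉ B → Summable fun i => Z i x ^ 2 := by
      intro x hx
      have h1 : G x ≠ ∞ := hx
      have h2 := ENNReal.summable_toReal h1
      exact h2.congr fun i => ENNReal.toReal_ofReal (sq_nonneg _)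
    have hBdiv : ∀ x ∈ B, Tendsto (fun M => SN M x) atTop atTop := by
      intro x hx
      have hns : ¬ Summable fun i => Z i x ^ 2 := by
        intro hsumm
        have hne : G x ≠ ∞ := by
          rw [hGdef]
          simp only []
          rw [← ENNReal.ofReal_tsum_of_nonneg (fun i => sq_nonneg _) hsumm]
          exact ENNReal.ofReal_ne_top
        exact hne hx
      have h3 : Tendsto (fun M => ∑ i ∈ Finset.range M, Z i x ^ 2) atTop atTop := by
        by_contra hnt
        exact hns ((summable_iff_not_tendsto_nat_atTop_of_nonneg
          (fun i => sq_nonneg _)).2 hnt)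
      have h4 : (fun M => SN M x) = fun M => ∑ i ∈ Finset.range M, Z i x ^ 2 :=
        funext fun M => hSN M x
      rw [h4]
      exact h3
    have hkey : ∀ n : ℕ, Real.exp (-((1/((n:ℝ)+1)) * ∑' i, γ i ^ 2))
        ≤ (π₀ Bᶜ).toReal := by
      intro n
      set t : ℝ := 1/((n:ℝ)+1) with htdef
      have ht : 0 < t := by positivity
      have hest : ∀ M, Real.exp (-(t * ∑' i, γ i ^ 2))
          ≤ ∫ x, Real.exp (-(t * SN M x)) ∂π₀ := by
        intro M
        rw [hexpint t ht M]
        have hps : ∑ i ∈ Finset.range M, γ i ^ 2 ≤ ∑' i, γ i ^ 2 :=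
          Summable.sum_le_tsum _ (fun i _ => (hγ2 i).le) hsum2
        calc Real.exp (-(t * ∑' i, γ i ^ 2))
            ≤ Real.exp (-(t * ∑ i ∈ Finset.range M, γ i ^ 2)) := by
              apply Real.exp_le_exp.2
              have := mul_le_mul_of_nonneg_left hps ht.le
              linarith
          _ = ∏ i ∈ Finset.range M, Real.exp (-(2 * t * γ i ^ 2 / 2)) := by
              rw [← Real.exp_sum]
              congr 1
              rw [Finset.mul_sum, ← Finset.sum_neg_distrib]
              exact Finset.sum_congr rfl fun i _ => by ring
          _ ≤ ∏ i ∈ Finset.range M, 1 / Real.sqrt (2 * t * γ i ^ 2 + 1) :=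
              Finset.prod_le_prod (fun i _ => (Real.exp_pos _).le)
                (fun i _ => inv_sqrt_ge (by positivity))
      have hintM : ∀ M, Integrable (fun x => Real.exp (-(t * SN M x))) π₀ := by
        intro M
        apply Integrable.mono' (integrable_const (1:ℝ))
        · exact ((hSNmeas M).const_mul t).neg.exp.aestronglyMeasurable
        · filter_upwards with x
          rw [Real.norm_eq_abs, abs_of_pos (Real.exp_pos _)]
          have h1 : -(t * SN M x) ≤ 0 := by nlinarith [hSNnonneg M x, ht.le]
          calc Real.exp (-(t * SN M x)) ≤ Real.exp 0 := Real.exp_le_exp.2 h1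
            _ = 1 := Real.exp_zero
      have hind : Tendsto (fun M => ∫ x, B.indicator
          (fun x => Real.exp (-(t * SN M x))) x ∂π₀) atTop (nhds 0) := by
        have h0 : (0:ℝ) = ∫ x, (0:ℝ) ∂π₀ := by simp
        rw [h0]
        apply tendsto_integral_of_dominated_convergence (bound := fun _ => (1:ℝ))
        · exact fun M => (((hSNmeas M).const_mul t).neg.exp.indicator
            hBmeas).aestronglyMeasurable
        · exact integrable_const 1
        · intro M
          filter_upwards with x
          rw [Real.norm_eq_abs]
          by_cases hx : x ∈ B
          · rw [Set.indicator_of_mem hx, abs_of_pos (Real.exp_pos _)]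
            have h1 : -(t * SN M x) ≤ 0 := by nlinarith [hSNnonneg M x, ht.le]
            calc Real.exp (-(t * SN M x)) ≤ Real.exp 0 := Real.exp_le_exp.2 h1
              _ = 1 := Real.exp_zero
          · rw [Set.indicator_of_notMem hx]
            simp
        · filter_upwards with x
          by_cases hx : x ∈ B
          · have h5 : Tendsto (fun M => t * SN M x) atTop atTop :=
              (hBdiv x hx).const_mul_atTop ht
            have h6 : Tendsto (fun M => -(t * SN M x)) atTop atBot :=
              tendsto_neg_atBot_iff.2 h5
            have h7 := Real.tendsto_exp_atBot.comp h6
            simp only [Function.comp_def] at h7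
            have h8 : ∀ M, B.indicator (fun x => Real.exp (-(t * SN M x))) x
                = Real.exp (-(t * SN M x)) := fun M => Set.indicator_of_mem hx _
            simp only [h8]
            exact h7
          · have h8 : ∀ M, B.indicator (fun x => Real.exp (-(t * SN M x))) x
                = 0 := fun M => Set.indicator_of_notMem hx _
            simp only [h8]
            exact tendsto_const_nhds
      have hcompl_le : ∀ M, ∫ x in Bᶜ, Real.exp (-(t * SN M x)) ∂π₀
          ≤ (π₀ Bᶜ).toReal := by
        intro M
        have hb : ‖∫ x in Bᶜ, Real.exp (-(t * SN M x)) ∂π₀‖ ≤ 1 * (π₀ Bᶜ).toReal := by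
          apply norm_setIntegral_le_of_norm_le_const (measure_lt_top π₀ _)
          · intro x _
            rw [Real.norm_eq_abs, abs_of_pos (Real.exp_pos _)]
            have h1 : -(t * SN M x) ≤ 0 := by nlinarith [hSNnonneg M x, ht.le]
            calc Real.exp (-(t * SN M x)) ≤ Real.exp 0 := Real.exp_le_exp.2 h1
              _ = 1 := Real.exp_zero
        calc ∫ x in Bᶜ, Real.exp (-(t * SN M x)) ∂π₀
            ≤ ‖∫ x in Bᶜ, Real.exp (-(t * SN M x)) ∂π₀‖ := le_abs_self _
          _ ≤ 1 * (π₀ Bᶜ).toReal := hb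
          _ = (π₀ Bᶜ).toReal := one_mul _
      have hsplitM : ∀ M, ∫ x, Real.exp (-(t * SN M x)) ∂π₀
          = (∫ x, B.indicator (fun x => Real.exp (-(t * SN M x))) x ∂π₀)
            + ∫ x in Bᶜ, Real.exp (-(t * SN M x)) ∂π₀ := by
        intro M
        rw [integral_indicator hBmeas]
        exact (integral_add_compl hBmeas (hintM M)).symm
      have hlim2 : Tendsto (fun M => (∫ x, B.indicator
          (fun x => Real.exp (-(t * SN M x))) x ∂π₀) + (π₀ Bᶜ).toReal)
          atTop (nhds ((π₀ Bᶜ).toReal)) := by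
        simpa using hind.add_const ((π₀ Bᶜ).toReal)
      apply ge_of_tendsto hlim2
      apply Eventually.of_forall
      intro M
      calc Real.exp (-(t * ∑' i, γ i ^ 2))
          ≤ ∫ x, Real.exp (-(t * SN M x)) ∂π₀ := hest M
        _ = (∫ x, B.indicator (fun x => Real.exp (-(t * SN M x))) x ∂π₀)
            + ∫ x in Bᶜ, Real.exp (-(t * SN M x)) ∂π₀ := hsplitM M
        _ ≤ (∫ x, B.indicator (fun x => Real.exp (-(t * SN M x))) x ∂π₀)
            + (π₀ Bᶜ).toReal := by linarith [hcompl_le M]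
    have hto1 : Tendsto (fun n : ℕ => Real.exp (-((1/((n:ℝ)+1)) * ∑' i, γ i ^ 2)))
        atTop (nhds 1) := by
      have h1 : Tendsto (fun n : ℕ => -((1/((n:ℝ)+1)) * ∑' i, γ i ^ 2))
          atTop (nhds 0) := by
        have h2 := tendsto_one_div_add_atTop_nhds_zero_nat.mul_const (∑' i, γ i ^ 2)
        simpa using h2.neg
      have h3 := (Real.continuous_exp.tendsto 0).comp h1
      simpa only [Function.comp_def, Real.exp_zero] using h3
    have h1le : (1:ℝ) ≤ (π₀ Bᶜ).toReal := le_of_tendsto hto1 (Eventually.of_forall hkey)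
    have hBc : π₀ Bᶜ = 1 := by
      refine le_antisymm prob_le_one ?_
      rw [← ENNReal.ofReal_one, ← ENNReal.ofReal_toReal (measure_ne_top π₀ Bᶜ)]
      exact ENNReal.ofReal_le_ofReal h1le
    have hB0 : π₀ B = 0 := by
      have hcompl := measure_compl hBmeas (measure_ne_top π₀ B)
      rw [measure_univ, hBc] at hcompl
      by_contra hne
      have hlt : (1:ℝ≥0∞) - π₀ B < 1 :=
        ENNReal.sub_lt_self ENNReal.one_ne_top one_ne_zero hne
      rw [← hcompl] at hlt
      exact absurd hlt (lt_irrefl _)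
    have hsub : {x | ¬ Summable fun i => Z i x ^ 2} ⊆ B := fun x hx => by
      by_contra hB
      exact hx (hBsumm x hB)
    rw [ae_iff]
    exact measure_mono_null hsub hB0
  -- a.e. convergence of SN to S, and SN ≤ S
  have haelim : ∀ᵐ x ∂π₀, Tendsto (fun M => SN M x) atTop (nhds (S x)) := by
    filter_upwards [hae] with x hx
    have := hx.hasSum.tendsto_sum_nat
    rw [← hS x] at this
    simpa only [hSN] using this
  have haele : ∀ᵐ x ∂π₀, ∀ N, SN N x ≤ S x := by
    filter_upwards [hae] with x hx N
    rw [hSN, hS]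
    exact Summable.sum_le_tsum _ (fun i _ => sq_nonneg _) hx
  -- cN formula and positivity
  have hcNeq : ∀ N, cN N = ∏ i ∈ Finset.range N, q2 i := by
    intro N
    have harg : (fun x => Real.exp (-SN N x / 2))
        = fun x => Real.exp (-((1/2 : ℝ) * SN N x)) := by
      funext x; congr 1; ring
    rw [hcN N, harg, hexpint (1/2) one_half_pos N]
    refine Finset.prod_congr rfl fun i _ => ?_
    simp only [hq2def]
    norm_num
  have hcNpos : ∀ N, 0 < cN N := fun N => by
    rw [hcNeq]; exact Finset.prod_pos fun i _ => hq2pos i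
  -- convergence of cN to c, positivity of c
  have hclim : Tendsto (fun M => cN M) atTop (nhds c) := by
    have hfun : (fun M => cN M) = fun M => ∫ x, Real.exp (-SN M x / 2) ∂π₀ :=
      funext fun M => hcN M
    rw [hfun, hc]
    apply tendsto_integral_of_dominated_convergence (bound := fun _ => (1:ℝ))
    · exact fun M => ((hSNmeas M).neg.div_const 2).exp.aestronglyMeasurable
    · exact integrable_const 1
    · intro M
      filter_upwards with x
      rw [Real.norm_eq_abs, abs_of_pos (Real.exp_pos _)]
      have : -SN M x / 2 ≤ 0 := by nlinarith [hSNnonneg M x]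
      calc Real.exp (-SN M x / 2) ≤ Real.exp 0 := Real.exp_le_exp.2 this
        _ = 1 := Real.exp_zero
    · filter_upwards [haelim] with x hx
      exact (Real.continuous_exp.tendsto _).comp ((hx.neg).div_const 2)
  have hcpos : 0 < c := by
    have hcM : ∀ M, Real.exp (-((∑' i, γ i ^ 2) / 2)) ≤ cN M := by
      intro M
      rw [hcNeq M]
      have hps : ∑ i ∈ Finset.range M, γ i ^ 2 ≤ ∑' i, γ i ^ 2 :=
        Summable.sum_le_tsum _ (fun i _ => (hγ2 i).le) hsum2
      calc Real.exp (-((∑' i, γ i ^ 2) / 2))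
          ≤ Real.exp (-((∑ i ∈ Finset.range M, γ i ^ 2) / 2)) :=
            Real.exp_le_exp.2 (by linarith)
        _ = ∏ i ∈ Finset.range M, Real.exp (-(γ i ^ 2 / 2)) := by
            rw [← Real.exp_sum]
            congr 1
            rw [Finset.sum_div, ← Finset.sum_neg_distrib]
        _ ≤ ∏ i ∈ Finset.range M, q2 i :=
            Finset.prod_le_prod (fun i _ => (Real.exp_pos _).le)
              (fun i _ => inv_sqrt_ge (hγ2 i).le)
    exact lt_of_lt_of_le (Real.exp_pos _) (ge_of_tendsto' hclim hcM)
  -- mixed integrals and their limit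
  have hmixed : ∀ N M, ∫ x, Real.exp (SN N x / 2 - SN (N + M) x) ∂π₀
      = cN N * ∏ i ∈ Finset.range M, q1 (N + i) := by
    intro N M
    set a : ℕ → ℝ := fun i => if i < N then (1/2 : ℝ) else 1 with hadef
    have hapos : ∀ i, 0 < a i := by
      intro i; by_cases hi : i < N <;> simp [hadef, hi] <;> norm_num
    have key := block_int π₀ γ hγ Z hZmeas hindep hgauss a hapos (Finset.range (N + M))
    have hsplit : ∀ (g : ℕ → ℝ), ∑ i ∈ Finset.range (N + M), a i * g i
        = (∑ i ∈ Finset.range N, g i) / 2 + ∑ i ∈ Finset.range M, g (N + i) := by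
      intro g
      rw [Finset.sum_range_add]
      congr 1
      · rw [Finset.sum_div]
        refine Finset.sum_congr rfl fun i hi => ?_
        rw [hadef]; simp only []
        rw [if_pos (Finset.mem_range.1 hi)]; ring
      · refine Finset.sum_congr rfl fun i _ => ?_
        rw [hadef]; simp only []
        rw [if_neg (by omega), one_mul]
    have harg : (fun x => Real.exp (SN N x / 2 - SN (N + M) x))
        = fun x => Real.exp (-∑ i ∈ Finset.range (N + M), a i * Z i x ^ 2) := by
      funext x
      congr 1
      rw [hsplit (fun i => Z i x ^ 2), hSN, hSN, Finset.sum_range_add]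
      ring
    rw [harg, key, Finset.prod_range_add, hcNeq N]
    congr 1
    · refine Finset.prod_congr rfl fun i hi => ?_
      have : a i = 1/2 := by rw [hadef]; simp only []; rw [if_pos (Finset.mem_range.1 hi)]
      rw [this]
      simp only [hq2def]
      norm_num
    · refine Finset.prod_congr rfl fun i _ => ?_
      have : a (N + i) = 1 := by rw [hadef]; simp only []; rw [if_neg (by omega)]
      rw [this]
      simp only [hq1def]
      norm_num
  have hIint : ∀ N, Integrable (fun x => Real.exp (SN N x / 2 - S x)) π₀ := by
    intro N
    apply Integrable.mono' (integrable_const (1:ℝ))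
    · exact (((hSNmeas N).div_const 2).sub hSmeas).exp.aestronglyMeasurable
    · filter_upwards [haele] with x hx
      rw [Real.norm_eq_abs, abs_of_pos (Real.exp_pos _)]
      have h1 : SN N x / 2 - S x ≤ 0 := by
        have := hx N; have := hSNnonneg N x; linarith
      calc Real.exp (SN N x / 2 - S x) ≤ Real.exp 0 := Real.exp_le_exp.2 h1
        _ = 1 := Real.exp_zero
  set I : ℕ → ℝ := fun N => ∫ x, Real.exp (SN N x / 2 - S x) ∂π₀ with hIdef
  have hIlim : ∀ N, Tendsto (fun M => cN N * ∏ i ∈ Finset.range M, q1 (N + i))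
      atTop (nhds (I N)) := by
    intro N
    have hDCT : Tendsto (fun M => ∫ x, Real.exp (SN N x / 2 - SN (N + M) x) ∂π₀)
        atTop (nhds (I N)) := by
      rw [hIdef]
      apply tendsto_integral_of_dominated_convergence (bound := fun _ => (1:ℝ))
      · exact fun M =>
          (((hSNmeas N).div_const 2).sub (hSNmeas (N + M))).exp.aestronglyMeasurable
      · exact integrable_const 1
      · intro M
        filter_upwards with x
        rw [Real.norm_eq_abs, abs_of_pos (Real.exp_pos _)]
        have h1 : SN N x ≤ SN (N + M) x := hSNmono x (Nat.le_add_right N M)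
        have h2 : SN N x / 2 - SN (N + M) x ≤ 0 := by
          have := hSNnonneg N x; linarith
        calc Real.exp (SN N x / 2 - SN (N + M) x) ≤ Real.exp 0 := Real.exp_le_exp.2 h2
          _ = 1 := Real.exp_zero
      · filter_upwards [haelim] with x hx
        have hcomp : Tendsto (fun M => SN (N + M) x) atTop (nhds (S x)) := by
          have := hx.comp (tendsto_add_atTop_nat N)
          simpa [add_comm, Function.comp_def] using this
        exact (Real.continuous_exp.tendsto _).comp
          (tendsto_const_nhds.sub hcomp)
    have heq : ∀ M, ∫ x, Real.exp (SN N x / 2 - SN (N + M) x) ∂π₀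
        = cN N * ∏ i ∈ Finset.range M, q1 (N + i) := fun M => hmixed N M
    exact hDCT.congr heq
  -- limits of tail products
  have hq2lim : ∀ N, Tendsto (fun M => ∏ i ∈ Finset.range M, q2 (N + i))
      atTop (nhds (c / cN N)) := by
    intro N
    have hsh : Tendsto (fun M => cN (N + M)) atTop (nhds c) := by
      have := hclim.comp (tendsto_add_atTop_nat N)
      simpa [add_comm, Function.comp_def] using this
    have heq : ∀ M, cN (N + M) / cN N = ∏ i ∈ Finset.range M, q2 (N + i) := by
      intro M
      rw [hcNeq (N + M), Finset.prod_range_add, ← hcNeq N]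
      exact mul_div_cancel_left₀ _ (hcNpos N).ne'
    exact (hsh.div_const (cN N)).congr heq
  have hq1lim : ∀ N, Tendsto (fun M => ∏ i ∈ Finset.range M, q1 (N + i))
      atTop (nhds (I N / cN N)) := by
    intro N
    have := (hIlim N).div_const (cN N)
    have heq : ∀ M, (cN N * ∏ i ∈ Finset.range M, q1 (N + i)) / cN N
        = ∏ i ∈ Finset.range M, q1 (N + i) := fun M =>
      mul_div_cancel_left₀ _ (hcNpos N).ne'
    exact this.congr heq
  set L : ℕ → ℝ := fun N => cN N * I N / c ^ 2 with hLdef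

  -- the χ² value
  have hintS : Integrable (fun x => Real.exp (-S x / 2)) π₀ := by
    apply Integrable.mono' (integrable_const (1:ℝ))
    · exact (hSmeas.neg.div_const 2).exp.aestronglyMeasurable
    · filter_upwards with x
      rw [Real.norm_eq_abs, abs_of_pos (Real.exp_pos _)]
      have h1 : -S x / 2 ≤ 0 := by nlinarith [hSnonneg x]
      calc Real.exp (-S x / 2) ≤ Real.exp 0 := Real.exp_le_exp.2 h1
        _ = 1 := Real.exp_zero
  have hintSN : ∀ N, Integrable (fun x => Real.exp (-SN N x / 2)) π₀ := by
    intro N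
    apply Integrable.mono' (integrable_const (1:ℝ))
    · exact ((hSNmeas N).neg.div_const 2).exp.aestronglyMeasurable
    · filter_upwards with x
      rw [Real.norm_eq_abs, abs_of_pos (Real.exp_pos _)]
      have h1 : -SN N x / 2 ≤ 0 := by nlinarith [hSNnonneg N x]
      calc Real.exp (-SN N x / 2) ≤ Real.exp 0 := Real.exp_le_exp.2 h1
        _ = 1 := Real.exp_zero
  have hval : ∀ N, (∫ x, (h N x - 1) ^ 2 ∂(μN N)) = L N - 1 := by
    intro N
    have hρnn : ∀ x, 0 ≤ Real.exp (-SN N x / 2) / cN N := fun x =>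
      div_nonneg (Real.exp_pos _).le (hcNpos N).le
    have hd : (fun x => ENNReal.ofReal (Real.exp (-SN N x / 2) / cN N))
        = fun x => (((Real.exp (-SN N x / 2) / cN N).toNNReal : ℝ≥0) : ℝ≥0∞) := rfl
    have hmeasρ : Measurable fun x => (Real.exp (-SN N x / 2) / cN N).toNNReal :=
      (((hSNmeas N).neg.div_const 2).exp.div_const (cN N)).real_toNNReal
    rw [hμN N, hd, integral_withDensity_eq_integral_smul hmeasρ]
    have hpt : ∀ x, (Real.exp (-SN N x / 2) / cN N).toNNReal • (h N x - 1) ^ 2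
        = (cN N / c ^ 2) * Real.exp (SN N x / 2 - S x)
          - (2 / c) * Real.exp (-S x / 2) + (1 / cN N) * Real.exp (-SN N x / 2) := by
      intro x
      rw [NNReal.smul_def, Real.coe_toNNReal _ (hρnn x), smul_eq_mul, hh]
      have hu : (0:ℝ) < Real.exp (-S x / 2) := Real.exp_pos _
      have hw : (0:ℝ) < Real.exp (-SN N x / 2) := Real.exp_pos _
      have h1 : Real.exp (SN N x / 2 - S x)
          = Real.exp (-S x / 2) ^ 2 / Real.exp (-SN N x / 2) := by
        rw [sq, ← Real.exp_add, ← Real.exp_sub]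
        congr 1
        ring
      rw [h1]
      field_simp [Real.exp_ne_zero, hcpos.ne', (hcNpos N).ne']
      ring
    simp_rw [hpt]
    have hint1 : Integrable
        (fun x => (cN N / c ^ 2) * Real.exp (SN N x / 2 - S x)) π₀ :=
      (hIint N).const_mul _
    have hint2 : Integrable (fun x => (2 / c) * Real.exp (-S x / 2)) π₀ :=
      hintS.const_mul _
    have hint3 : Integrable (fun x => (1 / cN N) * Real.exp (-SN N x / 2)) π₀ :=
      (hintSN N).const_mul _
    have hint12 : Integrable (fun x => (cN N / c ^ 2) * Real.exp (SN N x / 2 - S x)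
        - (2 / c) * Real.exp (-S x / 2)) π₀ := hint1.sub hint2
    rw [integral_add hint12 hint3, integral_sub hint1 hint2,
      integral_const_mul, integral_const_mul, integral_const_mul, ← hc, ← hcN N]
    have hIN : ∫ x, Real.exp (SN N x / 2 - S x) ∂π₀ = I N := rfl
    rw [hIN, hLdef]
    field_simp [hcpos.ne', (hcNpos N).ne']
    ring
  have hplim : ∀ N, Tendsto (fun M => ∏ i ∈ Finset.range M, p (N + i))
      atTop (nhds (L N)) := by
    intro N
    have key : ∀ M, (∏ i ∈ Finset.range M, q1 (N + i))
        / (∏ i ∈ Finset.range M, q2 (N + i)) ^ 2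
        = ∏ i ∈ Finset.range M, p (N + i) := by
      intro M
      rw [← Finset.prod_pow, ← Finset.prod_div_distrib]
      refine Finset.prod_congr rfl fun i _ => ?_
      simp only [hq1def, hq2def, hpdef]
      rw [div_pow, one_pow, Real.sq_sqrt (by positivity : (0:ℝ) ≤ γ (N+i) ^ 2 + 1)]
      have hs : Real.sqrt (2 * γ (N + i) ^ 2 + 1) ≠ 0 :=
        (Real.sqrt_pos.2 (by positivity)).ne'
      have hg : γ (N + i) ^ 2 + 1 ≠ 0 := by positivity
      field_simp
    have hlim := (hq1lim N).div ((hq2lim N).pow 2)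
      (pow_ne_zero 2 (div_pos hcpos (hcNpos N)).ne')
    have hLeq : (I N / cN N) / (c / cN N) ^ 2 = L N := by
      rw [hLdef]
      field_simp [hcpos.ne', (hcNpos N).ne']
    rw [hLeq] at hlim
    exact hlim.congr key
  have hp1 : ∀ i, 1 ≤ p i := by
    intro i
    have hs : (0:ℝ) < Real.sqrt (2 * γ i ^ 2 + 1) := Real.sqrt_pos.2 (by positivity)
    simp only [hpdef]
    rw [le_div_iff₀ hs, one_mul]
    calc Real.sqrt (2 * γ i ^ 2 + 1) ≤ Real.sqrt ((γ i ^ 2 + 1) ^ 2) :=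
        Real.sqrt_le_sqrt (by nlinarith [sq_nonneg (γ i ^ 2)])
      _ = γ i ^ 2 + 1 := Real.sqrt_sq (by positivity)
  have hprod : ∀ N, HasProd (fun i => p (N + i)) (L N) := by
    intro N
    have hmono : Monotone fun M => ∏ i ∈ Finset.range M, p (N + i) := by
      intro M M' hMM'
      exact prod_subset_le (fun i => hp1 _) (Finset.range_subset_range.2 hMM')
    have hub : ∀ M, (∏ i ∈ Finset.range M, p (N + i)) ≤ L N :=
      hmono.ge_of_tendsto (hplim N)
    have hlub : IsLUB (Set.range fun s : Finset ℕ => ∏ i ∈ s, p (N + i)) (L N) := by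
      constructor
      · rintro y ⟨s, rfl⟩
        obtain ⟨M, hM⟩ := s.exists_nat_subset_range
        exact le_trans (prod_subset_le (fun i => hp1 _) hM) (hub M)
      · intro b hb
        exact le_of_tendsto (hplim N)
          (Eventually.of_forall fun M => hb ⟨Finset.range M, rfl⟩)
    exact tendsto_atTop_isLUB (fun s t hst => prod_subset_le (fun i => hp1 _) hst) hlub
  have part1 : ∀ N, (∫ x, (h N x - 1) ^ 2 ∂(μN N)) = (∏' i, p (N + i)) - 1 := by
    intro N
    rw [(hprod N).tprod_eq, hval N]
  -- tail sums
  set T4 : ℕ → ℝ := fun N => ∑' i, γ (N + i) ^ 4 with hT4def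
  set R : ℕ → ℝ := fun N => ∑' i, γ (N + i) ^ 2 with hRdef
  have hsum4' : ∀ N, Summable fun i => γ (N + i) ^ 4 := by
    intro N
    have := (summable_nat_add_iff N).2 hsum4
    simpa [add_comm] using this
  have hsum2' : ∀ N, Summable fun i => γ (N + i) ^ 2 := by
    intro N
    have := (summable_nat_add_iff N).2 hsum2
    simpa [add_comm] using this
  have hT4pos : ∀ N, 0 < T4 N := by
    intro N
    exact Summable.tsum_pos (hsum4' N) (fun i => (pow_pos (hγ _) 4).le) 0 (pow_pos (hγ _) 4)
  have hRpos : ∀ N, 0 < R N := by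
    intro N
    exact Summable.tsum_pos (hsum2' N) (fun i => (pow_pos (hγ _) 2).le) 0 (pow_pos (hγ _) 2)
  have hT4lim : Tendsto T4 atTop (nhds 0) := by
    have key : ∀ N, (∑' i, γ i ^ 4) - ∑ i ∈ Finset.range N, γ i ^ 4 = T4 N := by
      intro N
      have h1 := Summable.sum_add_tsum_nat_add (f := fun i => γ i ^ 4) N hsum4
      have h2 : T4 N = ∑' i, γ (i + N) ^ 4 := tsum_congr fun i => by rw [add_comm]
      linarith
    have h3 := hsum4.hasSum.tendsto_sum_nat.const_sub (∑' i, γ i ^ 4)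
    rw [sub_self] at h3
    exact h3.congr key
  have hRlim : Tendsto R atTop (nhds 0) := by
    have key : ∀ N, (∑' i, γ i ^ 2) - ∑ i ∈ Finset.range N, γ i ^ 2 = R N := by
      intro N
      have h1 := Summable.sum_add_tsum_nat_add (f := fun i => γ i ^ 2) N hsum2
      have h2 : R N = ∑' i, γ (i + N) ^ 2 := tsum_congr fun i => by rw [add_comm]
      linarith
    have h3 := hsum2.hasSum.tendsto_sum_nat.const_sub (∑' i, γ i ^ 2)
    rw [sub_self] at h3
    exact h3.congr key
  -- bounds on L
  set K : ℕ → ℝ := fun N => Real.sqrt (2 * R N + 1) * (R N + 1 + Real.sqrt (2 * R N + 1))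
    with hKdef
  have hKpos : ∀ N, 0 < K N := by
    intro N
    have := hRpos N
    simp only [hKdef]
    have h1 : (0:ℝ) < Real.sqrt (2 * R N + 1) := Real.sqrt_pos.2 (by linarith)
    nlinarith
  have hLlower : ∀ N, 1 + T4 N / K N ≤ L N := by
    intro N
    have hKp := hKpos N
    have hpi : ∀ i : ℕ, γ (N + i) ^ 4 / K N ≤ p (N + i) - 1 := by
      intro i
      have hg : (0:ℝ) < γ (N + i) ^ 2 := hγ2 _
      have hgR : γ (N + i) ^ 2 ≤ R N := Summable.le_tsum (hsum2' N) i fun j _ => (hγ2 _).le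
      have hD : (0:ℝ) < 2 * γ (N + i) ^ 2 + 1 := by linarith
      have hsD : (0:ℝ) < Real.sqrt (2 * γ (N + i) ^ 2 + 1) := Real.sqrt_pos.2 hD
      have hsD2 : Real.sqrt (2 * γ (N + i) ^ 2 + 1) ^ 2 = 2 * γ (N + i) ^ 2 + 1 :=
        Real.sq_sqrt hD.le
      have hexact : p (N + i) - 1
          = γ (N + i) ^ 4 / (Real.sqrt (2 * γ (N + i) ^ 2 + 1)
            * (γ (N + i) ^ 2 + 1 + Real.sqrt (2 * γ (N + i) ^ 2 + 1))) := by
        have hden : (0:ℝ) < Real.sqrt (2 * γ (N + i) ^ 2 + 1)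
            * (γ (N + i) ^ 2 + 1 + Real.sqrt (2 * γ (N + i) ^ 2 + 1)) := by nlinarith
        simp only [hpdef]
        rw [div_sub' hsD.ne', div_eq_div_iff hsD.ne' hden.ne']
        nlinarith [hsD2]
      rw [hexact]
      have hsR : Real.sqrt (2 * γ (N + i) ^ 2 + 1) ≤ Real.sqrt (2 * R N + 1) :=
        Real.sqrt_le_sqrt (by linarith)
      have hden1 : (0:ℝ) < Real.sqrt (2 * γ (N + i) ^ 2 + 1)
          * (γ (N + i) ^ 2 + 1 + Real.sqrt (2 * γ (N + i) ^ 2 + 1)) := by nlinarith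
      have hdenle : Real.sqrt (2 * γ (N + i) ^ 2 + 1)
          * (γ (N + i) ^ 2 + 1 + Real.sqrt (2 * γ (N + i) ^ 2 + 1)) ≤ K N := by
        simp only [hKdef]
        apply mul_le_mul hsR (by linarith) (by positivity) (Real.sqrt_nonneg _)
      exact div_le_div_of_nonneg_left (by positivity) hden1 hdenle
    have hpart : ∀ M, 1 + (∑ i ∈ Finset.range M, γ (N + i) ^ 4) / K N
        ≤ ∏ i ∈ Finset.range M, p (N + i) := by
      intro M
      have h1 : (∑ i ∈ Finset.range M, γ (N + i) ^ 4) / K N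
          = ∑ i ∈ Finset.range M, γ (N + i) ^ 4 / K N := Finset.sum_div _ _ _
      rw [h1]
      calc 1 + ∑ i ∈ Finset.range M, γ (N + i) ^ 4 / K N
          ≤ 1 + ∑ i ∈ Finset.range M, (p (N + i) - 1) := by
            have := Finset.sum_le_sum (s := Finset.range M)
              (fun i _ => hpi i)
            linarith
        _ ≤ ∏ i ∈ Finset.range M, p (N + i) :=
            one_add_sum_le_prod _ (fun i => hp1 _) M
    have hlhs : Tendsto (fun M => 1 + (∑ i ∈ Finset.range M, γ (N + i) ^ 4) / K N)
        atTop (nhds (1 + T4 N / K N)) := by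
      exact (((hsum4' N).hasSum.tendsto_sum_nat).div_const (K N)).const_add 1
    exact le_of_tendsto_of_tendsto' hlhs (hplim N) hpart
  have hLupper : ∀ N, L N ≤ Real.exp (T4 N / 2) := by
    intro N
    have hpexp : ∀ j : ℕ, p j ≤ Real.exp (γ j ^ 4 / 2) := by
      intro j
      have hD : (0:ℝ) < 2 * γ j ^ 2 + 1 := by nlinarith [hγ2 j]
      have hsq : p j ^ 2 ≤ Real.exp (γ j ^ 4 / 2) ^ 2 := by
        have h1 : p j ^ 2 = (γ j ^ 2 + 1) ^ 2 / (2 * γ j ^ 2 + 1) := by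
          simp only [hpdef]
          rw [div_pow, Real.sq_sqrt hD.le]
        have h2 : (γ j ^ 2 + 1) ^ 2 / (2 * γ j ^ 2 + 1) ≤ 1 + γ j ^ 4 := by
          rw [div_le_iff₀ hD]
          nlinarith [pow_pos (hγ j) 6]
        have h3 : Real.exp (γ j ^ 4 / 2) ^ 2 = Real.exp (γ j ^ 4) := by
          rw [sq, ← Real.exp_add]; ring_nf
        rw [h1, h3]
        linarith [Real.add_one_le_exp (γ j ^ 4)]
      exact le_of_pow_le_pow_left₀ two_ne_zero (Real.exp_pos _).le hsq
    have hpart : ∀ M, ∏ i ∈ Finset.range M, p (N + i) ≤ Real.exp (T4 N / 2) := by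
      intro M
      calc ∏ i ∈ Finset.range M, p (N + i)
          ≤ ∏ i ∈ Finset.range M, Real.exp (γ (N + i) ^ 4 / 2) :=
            Finset.prod_le_prod (fun i _ => (hppos _).le) (fun i _ => hpexp _)
        _ = Real.exp (∑ i ∈ Finset.range M, γ (N + i) ^ 4 / 2) :=
            (Real.exp_sum _ _).symm
        _ ≤ Real.exp (T4 N / 2) := by
            apply Real.exp_le_exp.2
            rw [← Finset.sum_div]
            have := Summable.sum_le_tsum (Finset.range M)
              (fun i (_ : i ∉ Finset.range M) => (pow_pos (hγ (N + i)) 4).le) (hsum4' N)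
            linarith
    exact le_of_tendsto (hplim N) (Eventually.of_forall hpart)
  have hKlim : Tendsto K atTop (nhds 2) := by
    have hcont : Continuous fun r : ℝ =>
        Real.sqrt (2 * r + 1) * (r + 1 + Real.sqrt (2 * r + 1)) := by
      have h1 : Continuous fun r : ℝ => Real.sqrt (2 * r + 1) :=
        Real.continuous_sqrt.comp (by continuity)
      exact h1.mul (by continuity)
    have h2 := (hcont.tendsto 0).comp hRlim
    simp only [Function.comp_def] at h2
    have h20 : Real.sqrt (2 * (0:ℝ) + 1) * ((0:ℝ) + 1 + Real.sqrt (2 * (0:ℝ) + 1)) = 2 := by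
      norm_num [Real.sqrt_one]
    rw [h20] at h2
    exact h2
  -- part 2
  have hL1 : ∀ N, 1 ≤ L N := by
    intro N
    have := hLlower N
    have h2 : 0 < T4 N / K N := div_pos (hT4pos N) (hKpos N)
    linarith
  have part2 : Tendsto (fun N : ℕ => ∫ x, (h N x - 1) ^ 2 ∂(μN N)) atTop (nhds 0) := by
    have hup : Tendsto (fun N => Real.exp (T4 N / 2) - 1) atTop (nhds 0) := by
      have h1 : Tendsto (fun N => T4 N / 2) atTop (nhds 0) := by
        simpa using hT4lim.div_const 2
      have h2 := (Real.continuous_exp.tendsto 0).comp h1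
      simp only [Function.comp, Real.exp_zero] at h2
      simpa using h2.sub_const 1
    have hfun : (fun N : ℕ => ∫ x, (h N x - 1) ^ 2 ∂(μN N)) = fun N => L N - 1 :=
      funext hval
    rw [hfun]
    apply tendsto_of_tendsto_of_tendsto_of_le_of_le
      (tendsto_const_nhds : Tendsto (fun _ : ℕ => (0:ℝ)) atTop (nhds 0)) hup
    · intro N
      simp only []
      linarith [hL1 N]
    · intro N
      simp only []
      linarith [hLupper N]
  -- part 3
  have hexple : ∀ t : ℝ, 0 ≤ t → Real.exp t - 1 ≤ t * Real.exp t := by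
    intro t ht
    have h1 : Real.exp (-t) * Real.exp t = 1 := by rw [← Real.exp_add]; simp
    nlinarith [Real.add_one_le_exp (-t), Real.exp_pos t]
  have part3 : Tendsto
      (fun N : ℕ => (∫ x, (h N x - 1) ^ 2 ∂(μN N))
        / ((1 / 2) * ∑' i : ℕ, γ (N + i) ^ 4)) atTop (nhds 1) := by
    have hgoal : (fun N : ℕ => (∫ x, (h N x - 1) ^ 2 ∂(μN N))
        / ((1 / 2) * ∑' i : ℕ, γ (N + i) ^ 4))
        = fun N => (L N - 1) / ((1 / 2) * T4 N) := by
      funext N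
      rw [hval N, hT4def]
    rw [hgoal]
    have hlow : ∀ N, 2 / K N ≤ (L N - 1) / ((1 / 2) * T4 N) := by
      intro N
      have hT := hT4pos N
      have hK := hKpos N
      have hd : (0:ℝ) < (1 / 2) * T4 N := by linarith
      have h1 : (T4 N / K N) / ((1 / 2) * T4 N) = 2 / K N := by
        field_simp
      rw [← h1]
      apply div_le_div_of_nonneg_right ?_ hd.le
      linarith [hLlower N]
    have hup : ∀ N, (L N - 1) / ((1 / 2) * T4 N) ≤ Real.exp (T4 N / 2) := by
      intro N
      have hT := hT4pos N
      have hd : (0:ℝ) < (1 / 2) * T4 N := by linarith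
      rw [div_le_iff₀ hd]
      have h2 := hexple (T4 N / 2) (by linarith)
      have h3 := hLupper N
      nlinarith [Real.exp_pos (T4 N / 2)]
    have hlowlim : Tendsto (fun N => 2 / K N) atTop (nhds 1) := by
      have h1 := Tendsto.div
        (tendsto_const_nhds : Tendsto (fun _ : ℕ => (2:ℝ)) atTop (nhds 2))
        hKlim two_ne_zero
      norm_num at h1
      exact h1
    have huplim : Tendsto (fun N => Real.exp (T4 N / 2)) atTop (nhds 1) := by
      have h1 : Tendsto (fun N => T4 N / 2) atTop (nhds 0) := by
        simpa using hT4lim.div_const 2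
      have h2 := (Real.continuous_exp.tendsto 0).comp h1
      simpa only [Function.comp_def, Real.exp_zero] using h2
    exact tendsto_of_tendsto_of_tendsto_of_le_of_le hlowlim huplim hlow hup
  exact ⟨part1, part2, part3⟩
end

section
/- Let φ(r) = r/(1+r) and ψ(s) = log(φ(exp(−s))) = −s − log(1 + e^{−s}). Then for all s ∈ ℝ: 0 ≤ ψ'(s)² / (−ψ(s)) ≤ 1/2. Equivalently, with λ̃(s) = −log φ(e^{−s}) = log(1+e^s), one has (λ̃'(s))² ≤ (1/2) λ̃(s) for all real s. -/
open Real



noncomputable def F : ℝ → ℝ := fun y => Real.log (1 + y) - 2 + 4 / (1 + y) - 2 / (1 + y) ^ 2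

lemma F_hasDerivAt (x : ℝ) (hx : 0 < 1 + x) :
    HasDerivAt F ((x - 1) ^ 2 / (1 + x) ^ 3) x := by
  have h1 : HasDerivAt (fun y : ℝ => 1 + y) 1 x := by
    simpa using (hasDerivAt_id x).const_add (1 : ℝ)
  have hlog : HasDerivAt (fun y : ℝ => Real.log (1 + y)) (1 / (1 + x)) x := by
    simpa using h1.log hx.ne'
  have hinv : HasDerivAt (fun y : ℝ => 4 / (1 + y)) (4 * (-(1 / (1 + x) ^ 2) * 1)) x := by
    simpa [div_eq_mul_inv] using ((h1.inv hx.ne').const_mul (4 : ℝ))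
  have hp : HasDerivAt (fun y : ℝ => (1 + y) ^ 2) (2 * (1 + x) ^ 1 * 1) x := h1.pow 2
  have hinv2 : HasDerivAt (fun y : ℝ => 2 / (1 + y) ^ 2)
      (2 * (-(2 * (1 + x) ^ 1 * 1) / ((1 + x) ^ 2) ^ 2)) x := by
    simpa [div_eq_mul_inv] using ((hp.inv (by positivity)).const_mul (2 : ℝ))
  have H := ((hlog.sub_const 2).add hinv).sub hinv2
  have H' : HasDerivAt F _ x := H
  convert H' using 1
  field_simp
  ring

lemma key (x : ℝ) (hx : 0 ≤ x) : 2 * (x / (1 + x)) ^ 2 ≤ Real.log (1 + x) := by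
  have hmono : MonotoneOn F (Set.Ici (0:ℝ)) := by
    apply monotoneOn_of_deriv_nonneg (convex_Ici 0)
    · exact fun y hy => (F_hasDerivAt y (by simp at hy; linarith)).continuousAt.continuousWithinAt
    · intro y hy
      rw [interior_Ici] at hy
      exact (F_hasDerivAt y (by simp at hy; linarith)).differentiableAt.differentiableWithinAt
    · intro y hy
      rw [interior_Ici] at hy
      simp only [Set.mem_Ioi] at hy
      rw [(F_hasDerivAt y (by linarith)).deriv]
      positivity
  have h0 : F 0 ≤ F x := hmono (by simp) (by simpa using hx) hx
  have hF0 : F 0 = 0 := by norm_num [F]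
  have hxp : (0:ℝ) < 1 + x := by linarith
  have hFx : F x = Real.log (1 + x) - 2 * (x / (1 + x)) ^ 2 := by
    simp only [F]
    field_simp
    ring
  rw [hF0, hFx] at h0
  linarith

/-- Smoothed intensity estimate: with `φ(r) = r/(1+r)`,
`ψ(s) = log(φ(exp(−s))) = −s − log(1+e^{−s})` and the softplus intensity
`λ̃(s) = −log(φ(e^{−s})) = log(1+e^s)` (whose derivative is the logistic sigmoid
`σ(s) = e^s/(1+e^s)`), one has `0 ≤ ψ'(s)²/(−ψ(s)) ≤ 1/2` for all `s ∈ ℝ`;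
equivalently `σ(s)² = λ̃'(s)² ≤ (1/2) λ̃(s)`. -/
theorem smoothed_rate_derivative_bound
    (ψ : ℝ → ℝ) (hψ : ∀ s, ψ s = Real.log (Real.exp (-s) / (1 + Real.exp (-s)))) :
    ∀ s : ℝ,
      (0 ≤ (deriv ψ s) ^ 2 / (-ψ s) ∧ (deriv ψ s) ^ 2 / (-ψ s) ≤ 1 / 2) ∧
      (Real.exp s / (1 + Real.exp s)) ^ 2 ≤ (1 / 2) * Real.log (1 + Real.exp s) := by
  have hψ' : ψ = fun s => -s - Real.log (1 + Real.exp (-s)) := by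
    funext s
    rw [hψ, Real.log_div (Real.exp_pos _).ne' (by positivity), Real.log_exp]
  subst hψ'
  intro s
  have he : (0:ℝ) < Real.exp s := Real.exp_pos s
  have he' : (0:ℝ) < Real.exp (-s) := Real.exp_pos _
  have h1e : (0:ℝ) < 1 + Real.exp (-s) := by linarith
  have h1e' : (0:ℝ) < 1 + Real.exp s := by linarith
  -- derivative
  have hexp : HasDerivAt (fun x : ℝ => Real.exp (-x)) (Real.exp (-s) * (-1)) s :=
    ((hasDerivAt_id s).neg.exp)
  have hlog : HasDerivAt (fun x : ℝ => Real.log (1 + Real.exp (-x)))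
      ((Real.exp (-s) * (-1)) / (1 + Real.exp (-s))) s :=
    (hexp.const_add 1).log h1e.ne'
  have hD : HasDerivAt (fun x : ℝ => -x - Real.log (1 + Real.exp (-x)))
      (-1 - (Real.exp (-s) * (-1)) / (1 + Real.exp (-s))) s :=
    (hasDerivAt_id s).neg.sub hlog
  have hderiv : deriv (fun x : ℝ => -x - Real.log (1 + Real.exp (-x))) s
      = -1 - (Real.exp (-s) * (-1)) / (1 + Real.exp (-s)) := hD.deriv
  have hen : Real.exp (-s) = (Real.exp s)⁻¹ := Real.exp_neg s
  have hsq : (deriv (fun x : ℝ => -x - Real.log (1 + Real.exp (-x))) s) ^ 2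
      = (Real.exp s / (1 + Real.exp s)) ^ 2 := by
    rw [hderiv, hen]
    field_simp
    ring
  have hneg : -((fun x : ℝ => -x - Real.log (1 + Real.exp (-x))) s)
      = Real.log (1 + Real.exp s) := by
    simp only
    have : (1:ℝ) + Real.exp s = Real.exp s * (1 + Real.exp (-s)) := by
      rw [hen]; field_simp; ring
    rw [this, Real.log_mul he.ne' h1e.ne', Real.log_exp]
    ring
  have hkey := key (Real.exp s) he.le
  have hB : (0:ℝ) < Real.log (1 + Real.exp s) :=
    Real.log_pos (by linarith)
  have hA : (0:ℝ) ≤ (Real.exp s / (1 + Real.exp s)) ^ 2 := sq_nonneg _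
  refine ⟨⟨?_, ?_⟩, by linarith⟩
  · rw [hsq, hneg]; positivity
  · rw [hsq, hneg, div_le_iff₀ hB]; linarith
end
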